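/- arXiv:2109.03460 — 10 statements merged into one kernel-verified Lean document; each statement's English description precedes it below -/
import Mathlib

section
/- Let ([·,·]₁, D, K) be a Poisson triple of the trivial extension algebra P = P₀ ⋉ P₁. Then the bracket defined by {(f,η),(g,ξ)} := ({f,g}₀, D_f ξ − D_g η + [η,ξ]₁ + K(f,g)) is an admissible Poisson structure on P: it is R-bilinear, antisymmetric, satisfies the Jacobi identity, satisfies the Leibniz rule {π₁, π₂·π₃} = {π₁,π₂}·π₃ + π₂·{π₁,π₃} with respect to the multiplication of P, and pr₀{(f,η),(g,ξ)} = {f,g}₀ for all f,g ∈ P₀ and η,ξ ∈ P₁. -/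
variable {R P₀ P₁ : Type*} [CommRing R] [CommRing P₀] [Algebra R P₀]
  [AddCommGroup P₁] [Module R P₁] [Module P₀ P₁] [IsScalarTower R P₀ P₁]

/-- Multiplication of the trivial extension algebra `P = P₀ ⋉ P₁`, realized on `P₀ × P₁`:
`(f,η)·(g,ξ) = (f·g, f·ξ + g·η)`. -/
def tmul (a b : P₀ × P₁) : P₀ × P₁ := (a.1 * b.1, a.1 • b.2 + b.1 • a.2)

/-- a Poisson triple `([·,·]₁, D, K)` of `P = P₀ ⋉ P₁` induces an admissible
Poisson structure `{(f,η),(g,ξ)} = ({f,g}₀, D_f ξ − D_g η + [η,ξ]₁ + K(f,g))` on `P`. -/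
theorem stmt0
    -- the Poisson algebra (P₀, {·,·}₀)
    (pb : P₀ →ₗ[R] P₀ →ₗ[R] P₀)
    (hpb_skew : ∀ f g, pb f g = - pb g f)
    (hpb_jac : ∀ f g h, pb f (pb g h) + pb g (pb h f) + pb h (pb f g) = 0)
    (hpb_leib : ∀ f g h, pb f (g * h) = pb f g * h + g * pb f h)
    -- the P₀-bilinear Lie bracket [·,·]₁ on P₁
    (lb : P₁ →ₗ[P₀] P₁ →ₗ[P₀] P₁)
    (hlb_skew : ∀ η ξ, lb η ξ = - lb ξ η)
    (hlb_jac : ∀ η ξ ζ, lb η (lb ξ ζ) + lb ξ (lb ζ η) + lb ζ (lb η ξ) = 0)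
    -- the contravariant derivative D
    (D : P₀ →ₗ[R] P₁ →ₗ[R] P₁)
    (hD_mul : ∀ f g η, D (f * g) η = f • D g η + g • D f η)
    (hD_leib : ∀ f g η, D f (g • η) = g • D f η + (pb f g) • η)
    -- the skew-symmetric biderivation K
    (K : P₀ →ₗ[R] P₀ →ₗ[R] P₁)
    (hK_skew : ∀ f g, K f g = - K g f)
    (hK_der : ∀ f g h, K (f * g) h = f • K g h + g • K f h)
    -- the structure equations (PT1)-(PT3)
    (hPT1 : ∀ f η ξ, D f (lb η ξ) = lb (D f η) ξ + lb η (D f ξ))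
    (hPT2 : ∀ f g η, D f (D g η) - D g (D f η) - D (pb f g) η = lb (K f g) η)
    (hPT3 : ∀ f g h,
      D f (K g h) + D g (K h f) + D h (K f g)
        + K f (pb g h) + K g (pb h f) + K h (pb f g) = 0)
    -- the induced bracket on P = P₀ ⋉ P₁
    (br : P₀ × P₁ → P₀ × P₁ → P₀ × P₁)
    (hbr : ∀ (f g : P₀) (η ξ : P₁),
      br (f, η) (g, ξ) = (pb f g, D f ξ - D g η + lb η ξ + K f g)) :
    -- `br` is R-bilinear
    (∀ a b c : P₀ × P₁, br (a + b) c = br a c + br b c) ∧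
    (∀ (r : R) (a b : P₀ × P₁), br (r • a) b = r • br a b) ∧
    (∀ a b c : P₀ × P₁, br a (b + c) = br a b + br a c) ∧
    (∀ (r : R) (a b : P₀ × P₁), br a (r • b) = r • br a b) ∧
    -- antisymmetric
    (∀ a b : P₀ × P₁, br a b = - br b a) ∧
    -- Jacobi identity
    (∀ a b c : P₀ × P₁, br a (br b c) + br b (br c a) + br c (br a b) = 0) ∧
    -- Leibniz rule for the multiplication of P
    (∀ a b c : P₀ × P₁, br a (tmul b c) = tmul (br a b) c + tmul b (br a c)) ∧
    -- admissibility: pr₀ is a Poisson morphism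
    (∀ (f g : P₀) (η ξ : P₁), (br (f, η) (g, ξ)).1 = pb f g) := by

  have hbr' : ∀ a b : P₀ × P₁,
      br a b = (pb a.1 b.1, D a.1 b.2 - D b.1 a.2 + lb a.2 b.2 + K a.1 b.1) :=
    fun a b => hbr a.1 b.1 a.2 b.2
  refine ⟨?_, ?_, ?_, ?_, ?_, ?_, ?_, ?_⟩
  · intro a b c
    simp only [hbr', Prod.fst_add, Prod.snd_add, map_add, LinearMap.add_apply,
      Prod.mk_add_mk, Prod.mk.injEq]
    all_goals constructor <;> first | trivial | abel
  · intro r a b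
    simp only [hbr', Prod.smul_fst, Prod.smul_snd, map_smul, LinearMap.smul_apply,
      LinearMap.map_smul_of_tower, Prod.smul_mk, Prod.mk.injEq, smul_sub, smul_add]
    all_goals constructor <;> first | trivial | abel
  · intro a b c
    simp only [hbr', Prod.fst_add, Prod.snd_add, map_add, LinearMap.add_apply,
      Prod.mk_add_mk, Prod.mk.injEq]
    all_goals constructor <;> first | trivial | abel
  · intro r a b
    simp only [hbr', Prod.smul_fst, Prod.smul_snd, map_smul, LinearMap.smul_apply,
      LinearMap.map_smul_of_tower, Prod.smul_mk, Prod.mk.injEq, smul_sub, smul_add]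
    all_goals constructor <;> first | trivial | abel
  · intro a b
    simp only [hbr', Prod.neg_mk, Prod.mk.injEq]
    refine ⟨hpb_skew _ _, ?_⟩
    linear_combination (norm := abel) hlb_skew a.2 b.2 + hK_skew a.1 b.1
  · intro a b c
    obtain ⟨f, η⟩ := a; obtain ⟨g, ξ⟩ := b; obtain ⟨h, ζ⟩ := c
    simp only [hbr, map_add, map_sub, LinearMap.add_apply, LinearMap.sub_apply,
      Prod.mk_add_mk, Prod.mk.injEq, Prod.mk_eq_zero]
    constructor
    · linear_combination (norm := abel) hpb_jac f g h
    · linear_combination (norm := abel) hPT2 f g ζ + hPT2 g h η + hPT2 h f ξ +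
        hPT1 f ξ ζ + hPT1 g ζ η + hPT1 h η ξ + hlb_jac η ξ ζ + hPT3 f g h +
        hlb_skew (K f g) ζ + hlb_skew (K g h) η + hlb_skew (K h f) ξ +
        hlb_skew (D f ξ) ζ + hlb_skew (D g ζ) η + hlb_skew (D h η) ξ
  · intro a b c
    obtain ⟨f, η⟩ := a; obtain ⟨g, ξ⟩ := b; obtain ⟨h, ζ⟩ := c
    have hK' : K f (g * h) = g • K f h + h • K f g := by
      rw [hK_skew f (g * h), hK_der g h f, hK_skew h f, hK_skew g f]
      module
    simp only [tmul, hbr, map_add, map_sub, LinearMap.add_apply, LinearMap.sub_apply,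
      hD_leib, hD_mul, hpb_leib, hK', LinearMap.map_smul, Prod.mk_add_mk, Prod.mk.injEq]
    refine ⟨trivial, ?_⟩
    module
  · intro f g η ξ
    rw [hbr]
end

section
/- Let {·,·} be an admissible Poisson structure on the trivial extension algebra P = P₀ ⋉ P₁. Define [η,ξ]₁ := pr₁{(0,η),(0,ξ)}, D_f η := pr₁{(f,0),(0,η)} and K(f,g) := pr₁{(f,0),(g,0)}. Then ([·,·]₁, D, K) is a Poisson triple of P: [·,·]₁ is a P₀-bilinear antisymmetric bracket on P₁ satisfying the Jacobi identity; D satisfies D_{f·g}η = f·D_g η + g·D_f η and D_f(g·η) = g·D_f η + {f,g}₀·η; K is R-bilinear, antisymmetric, and a derivation in each argument; the structure equations (PT1), (PT2), (PT3) hold; and the original bracket is recovered as {(f,η),(g,ξ)} = ({f,g}₀, D_f ξ − D_g η + [η,ξ]₁ + K(f,g)). -/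
variable {R P₀ P₁ : Type*} [CommRing R] [CommRing P₀] [Algebra R P₀]
  [AddCommGroup P₁] [Module R P₁] [Module P₀ P₁] [IsScalarTower R P₀ P₁]

/-- an admissible Poisson structure on `P = P₀ ⋉ P₁` induces a Poisson triple
`([·,·]₁, D, K)` via `[η,ξ]₁ = pr₁{(0,η),(0,ξ)}`, `D_f η = pr₁{(f,0),(0,η)}`,
`K(f,g) = pr₁{(f,0),(g,0)}`, and the bracket is recovered from the triple. -/
theorem stmt1
    -- the Poisson algebra (P₀, {·,·}₀)
    (pb : P₀ →ₗ[R] P₀ →ₗ[R] P₀)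
    (hpb_skew : ∀ f g, pb f g = - pb g f)
    (hpb_jac : ∀ f g h, pb f (pb g h) + pb g (pb h f) + pb h (pb f g) = 0)
    (hpb_leib : ∀ f g h, pb f (g * h) = pb f g * h + g * pb f h)
    -- the admissible Poisson structure on P
    (br : (P₀ × P₁) →ₗ[R] (P₀ × P₁) →ₗ[R] P₀ × P₁)
    (hbr_skew : ∀ a b, br a b = - br b a)
    (hbr_jac : ∀ a b c, br a (br b c) + br b (br c a) + br c (br a b) = 0)
    (hbr_leib : ∀ a b c, br a (tmul b c) = tmul (br a b) c + tmul b (br a c))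
    (hbr_adm : ∀ (f g : P₀) (η ξ : P₁), (br (f, η) (g, ξ)).1 = pb f g)
    -- the induced data
    (lb : P₁ → P₁ → P₁) (hlb : ∀ η ξ, lb η ξ = (br (0, η) (0, ξ)).2)
    (D : P₀ → P₁ → P₁) (hD : ∀ f η, D f η = (br (f, 0) (0, η)).2)
    (K : P₀ → P₀ → P₁) (hK : ∀ f g, K f g = (br (f, 0) (g, 0)).2) :
    -- [·,·]₁ is a P₀-bilinear antisymmetric bracket satisfying the Jacobi identity
    (∀ η ξ ζ, lb (η + ξ) ζ = lb η ζ + lb ξ ζ) ∧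
    (∀ (f : P₀) (η ξ : P₁), lb (f • η) ξ = f • lb η ξ) ∧
    (∀ η ξ ζ, lb η (ξ + ζ) = lb η ξ + lb η ζ) ∧
    (∀ (f : P₀) (η ξ : P₁), lb η (f • ξ) = f • lb η ξ) ∧
    (∀ η ξ, lb η ξ = - lb ξ η) ∧
    (∀ η ξ ζ, lb η (lb ξ ζ) + lb ξ (lb ζ η) + lb ζ (lb η ξ) = 0) ∧
    -- D is a contravariant derivative (R-bilinear, with the two Leibniz rules)
    (∀ f g η, D (f + g) η = D f η + D g η) ∧
    (∀ (r : R) (f : P₀) (η : P₁), D (r • f) η = r • D f η) ∧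
    (∀ f η ξ, D f (η + ξ) = D f η + D f ξ) ∧
    (∀ (r : R) (f : P₀) (η : P₁), D f (r • η) = r • D f η) ∧
    (∀ f g η, D (f * g) η = f • D g η + g • D f η) ∧
    (∀ f g η, D f (g • η) = g • D f η + (pb f g) • η) ∧
    -- K is R-bilinear, antisymmetric, a derivation in each argument
    (∀ f g h, K (f + g) h = K f h + K g h) ∧
    (∀ (r : R) (f g : P₀), K (r • f) g = r • K f g) ∧
    (∀ f g h, K f (g + h) = K f g + K f h) ∧
    (∀ (r : R) (f g : P₀), K f (r • g) = r • K f g) ∧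
    (∀ f g, K f g = - K g f) ∧
    (∀ f g h, K (f * g) h = f • K g h + g • K f h) ∧
    (∀ f g h, K f (g * h) = g • K f h + h • K f g) ∧
    -- the structure equations (PT1)-(PT3)
    (∀ f η ξ, D f (lb η ξ) = lb (D f η) ξ + lb η (D f ξ)) ∧
    (∀ f g η, D f (D g η) - D g (D f η) - D (pb f g) η = lb (K f g) η) ∧
    (∀ f g h,
      D f (K g h) + D g (K h f) + D h (K f g)
        + K f (pb g h) + K g (pb h f) + K h (pb f g) = 0) ∧
    -- the original bracket is recovered from the triple
    (∀ (f g : P₀) (η ξ : P₁),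
      br (f, η) (g, ξ) = (pb f g, D f ξ - D g η + lb η ξ + K f g)) := by
  -- basic component lemmas
  have hLb : ∀ η ξ : P₁, br (0, η) (0, ξ) = (0, lb η ξ) := by
    intro η ξ
    refine Prod.ext ?_ (hlb η ξ).symm
    simpa using hbr_adm 0 0 η ξ
  have hDfη : ∀ (f : P₀) (η : P₁), br (f, 0) (0, η) = (0, D f η) := by
    intro f η
    refine Prod.ext ?_ (hD f η).symm
    simpa using hbr_adm f 0 0 η
  have hDfη' : ∀ (f : P₀) (η : P₁), br (0, η) (f, 0) = (0, - D f η) := by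
    intro f η
    rw [hbr_skew, hDfη]
    simp [Prod.neg_mk]
  have hKfg : ∀ f g : P₀, br (f, 0) (g, 0) = (pb f g, K f g) :=
    fun f g => Prod.ext (hbr_adm f g 0 0) (hK f g).symm
  -- lb : additivity
  have L1 : ∀ η ξ ζ, lb (η + ξ) ζ = lb η ζ + lb ξ ζ := by
    intro η ξ ζ
    have h : ((0 : P₀), η + ξ) = ((0 : P₀), η) + ((0 : P₀), ξ) := by simp
    rw [hlb, hlb, hlb, h, map_add]
    simp
  have L3 : ∀ η ξ ζ, lb η (ξ + ζ) = lb η ξ + lb η ζ := by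
    intro η ξ ζ
    have h : ((0 : P₀), ξ + ζ) = ((0 : P₀), ξ) + ((0 : P₀), ζ) := by simp
    rw [hlb, hlb, hlb, h, map_add]
    simp
  have L5 : ∀ η ξ, lb η ξ = - lb ξ η := by
    intro η ξ
    rw [hlb, hlb, hbr_skew]
    simp
  -- lb : P₀-linearity in second argument, via Leibniz
  have L4 : ∀ (f : P₀) (η ξ : P₁), lb η (f • ξ) = f • lb η ξ := by
    intro f η ξ
    have h := congrArg Prod.snd (hbr_leib (0, η) (f, 0) (0, ξ))
    simp only [tmul, hDfη', hLb, mul_zero, zero_mul, smul_zero, zero_smul, add_zero, zero_add,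
      smul_neg, neg_zero, Prod.snd_add] at h
    exact h
  have L2 : ∀ (f : P₀) (η ξ : P₁), lb (f • η) ξ = f • lb η ξ := by
    intro f η ξ
    rw [L5, L4, ← smul_neg, ← L5]
  -- lb : Jacobi
  have L6 : ∀ η ξ ζ, lb η (lb ξ ζ) + lb ξ (lb ζ η) + lb ζ (lb η ξ) = 0 := by
    intro η ξ ζ
    have h := congrArg Prod.snd (hbr_jac (0, η) (0, ξ) (0, ζ))
    simp only [hLb, Prod.snd_add] at h
    simpa using h
  -- D : additivity and R-linearity
  have D1 : ∀ f g η, D (f + g) η = D f η + D g η := by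
    intro f g η
    have h : ((f + g : P₀), (0 : P₁)) = (f, (0 : P₁)) + (g, (0 : P₁)) := by simp
    rw [hD, hD, hD, h, map_add]
    simp
  have D2 : ∀ (r : R) (f : P₀) (η : P₁), D (r • f) η = r • D f η := by
    intro r f η
    have h : ((r • f : P₀), (0 : P₁)) = r • ((f, (0 : P₁)) : P₀ × P₁) := by simp
    rw [hD, hD, h, map_smul]
    simp
  have D3 : ∀ f η ξ, D f (η + ξ) = D f η + D f ξ := by
    intro f η ξ
    have h : ((0 : P₀), η + ξ) = ((0 : P₀), η) + ((0 : P₀), ξ) := by simp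
    rw [hD, hD, hD, h, map_add]
    simp
  have D4 : ∀ (r : R) (f : P₀) (η : P₁), D f (r • η) = r • D f η := by
    intro r f η
    have h : ((0 : P₀), r • η) = r • (((0 : P₀), η) : P₀ × P₁) := by simp
    rw [hD, hD, h, map_smul]
    simp
  have Dneg : ∀ (f : P₀) (η : P₁), D f (-η) = - D f η := by
    intro f η
    have h : ((0 : P₀), -η) = -(((0 : P₀), η) : P₀ × P₁) := by simp
    rw [hD, hD, h, map_neg]
    simp
  -- D : Leibniz rules
  have D5 : ∀ f g η, D (f * g) η = f • D g η + g • D f η := by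
    intro f g η
    have h := congrArg Prod.snd (hbr_leib (0, η) (f, 0) (g, 0))
    simp only [tmul, hDfη', mul_zero, zero_mul, smul_zero, zero_smul, add_zero, zero_add,
      smul_neg, neg_zero, Prod.snd_add] at h
    -- h : (br (0, η) (f * g, 0)).2 = ...
    rw [← neg_add] at h
    rw [neg_injective h, add_comm]
  have D6 : ∀ f g η, D f (g • η) = g • D f η + (pb f g) • η := by
    intro f g η
    have h := congrArg Prod.snd (hbr_leib (f, 0) (g, 0) (0, η))
    simp only [tmul, hKfg, hDfη, mul_zero, zero_mul, smul_zero, zero_smul, add_zero, zero_add,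
      Prod.snd_add] at h
    rw [h]; try rw [add_comm]
  -- K : additivity and R-linearity
  have K1 : ∀ f g h, K (f + g) h = K f h + K g h := by
    intro f g h
    have e : ((f + g : P₀), (0 : P₁)) = (f, (0 : P₁)) + (g, (0 : P₁)) := by simp
    rw [hK, hK, hK, e, map_add]
    simp
  have K2 : ∀ (r : R) (f g : P₀), K (r • f) g = r • K f g := by
    intro r f g
    have e : ((r • f : P₀), (0 : P₁)) = r • ((f, (0 : P₁)) : P₀ × P₁) := by simp
    rw [hK, hK, e, map_smul]
    simp
  have K3 : ∀ f g h, K f (g + h) = K f g + K f h := by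
    intro f g h
    have e : ((g + h : P₀), (0 : P₁)) = (g, (0 : P₁)) + (h, (0 : P₁)) := by simp
    rw [hK, hK, hK, e, map_add]
    simp
  have K4 : ∀ (r : R) (f g : P₀), K f (r • g) = r • K f g := by
    intro r f g
    have e : ((r • g : P₀), (0 : P₁)) = r • ((g, (0 : P₁)) : P₀ × P₁) := by simp
    rw [hK, hK, e, map_smul]
    simp
  have K5 : ∀ f g, K f g = - K g f := by
    intro f g
    rw [hK, hK, hbr_skew]
    simp
  -- K : derivation in the second argument
  have K7 : ∀ f g h, K f (g * h) = g • K f h + h • K f g := by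
    intro f g h
    have e := congrArg Prod.snd (hbr_leib (f, 0) (g, 0) (h, 0))
    simp only [tmul, hKfg, mul_zero, zero_mul, smul_zero, zero_smul, add_zero, zero_add,
      Prod.snd_add] at e
    -- e : (br (f,0) (g*h, 0)).2 = h • K f g + g • K f h
    rw [e]; try rw [add_comm]
  have K6 : ∀ f g h, K (f * g) h = f • K g h + g • K f h := by
    intro f g h
    rw [K5 (f * g) h, K7, neg_add, ← smul_neg, ← smul_neg, ← K5 g h, ← K5 f h]
  -- PT1
  have lbneg : ∀ η ξ : P₁, lb η (-ξ) = - lb η ξ := by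
    intro η ξ
    have h : ((0 : P₀), -ξ) = -(((0 : P₀), ξ) : P₀ × P₁) := by simp
    rw [hlb, hlb, h, map_neg]
    simp
  have PT1 : ∀ f η ξ, D f (lb η ξ) = lb (D f η) ξ + lb η (D f ξ) := by
    intro f η ξ
    have h := congrArg Prod.snd (hbr_jac (f, 0) (0, η) (0, ξ))
    simp only [hLb, hDfη, hDfη', Prod.snd_add, Prod.snd_zero, lbneg] at h
    rw [L5 (D f η) ξ, ← sub_eq_zero,
      show D f (lb η ξ) - (-lb ξ (D f η) + lb η (D f ξ))
        = D f (lb η ξ) + -lb η (D f ξ) + lb ξ (D f η) from by abel]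
    exact h
  -- PT2
  have PT2 : ∀ f g η, D f (D g η) - D g (D f η) - D (pb f g) η = lb (K f g) η := by
    intro f g η
    have h := congrArg Prod.snd (hbr_jac (f, 0) (g, 0) (0, η))
    have e : ((pb f g : P₀), K f g) = ((pb f g : P₀), (0 : P₁)) + ((0 : P₀), K f g) := by simp
    rw [hKfg, hDfη, hDfη', hDfη, e, map_add, hDfη', hLb] at h
    simp only [Prod.snd_add, Prod.snd_zero, hDfη, Dneg] at h
    rw [L5 (K f g) η, ← sub_eq_zero,
      show D f (D g η) - D g (D f η) - D (pb f g) η - -lb η (K f g)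
        = D f (D g η) + -D g (D f η) + (-D (pb f g) η + lb η (K f g)) from by abel]
    exact h
  -- PT3
  have PT3 : ∀ f g h,
      D f (K g h) + D g (K h f) + D h (K f g)
        + K f (pb g h) + K g (pb h f) + K h (pb f g) = 0 := by
    intro f g h
    have e := hbr_jac (f, 0) (g, 0) (h, 0)
    have s : ∀ a b : P₀, ((pb a b : P₀), K a b) = ((pb a b : P₀), (0 : P₁)) + ((0 : P₀), K a b) := by
      intro a b; simp
    rw [hKfg g h, hKfg h f, hKfg f g, s, s, s, map_add, map_add, map_add,
      hKfg, hKfg, hKfg, hDfη, hDfη, hDfη] at e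
    have e2 := congrArg Prod.snd e
    simp only [Prod.snd_add] at e2
    rw [show D f (K g h) + D g (K h f) + D h (K f g)
        + K f (pb g h) + K g (pb h f) + K h (pb f g)
        = K f (pb g h) + D f (K g h) + (K g (pb h f) + D g (K h f))
          + (K h (pb f g) + D h (K f g)) from by abel]
    simpa using e2
  -- recovery
  have REC : ∀ (f g : P₀) (η ξ : P₁),
      br (f, η) (g, ξ) = (pb f g, D f ξ - D g η + lb η ξ + K f g) := by
    intro f g η ξ
    have e1 : ((f : P₀), η) = ((f : P₀), (0 : P₁)) + ((0 : P₀), η) := by simp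
    have e2 : ((g : P₀), ξ) = ((g : P₀), (0 : P₁)) + ((0 : P₀), ξ) := by simp
    rw [e1, e2]
    simp only [map_add, LinearMap.add_apply]
    rw [hKfg, hDfη, hDfη', hLb]
    refine Prod.ext ?_ ?_ <;> simp <;> abel
  exact ⟨L1, L2, L3, L4, L5, L6, D1, D2, D3, D4, D5, D6, K1, K2, K3, K4, K5, K6, K7,
    PT1, PT2, PT3, REC⟩
end

section
/- Let ([·,·]₁, D, K) be a Poisson triple of the trivial extension algebra P = P₀ ⋉ P₁ and let Z(P₁) be the center of (P₁,[·,·]₁). Then: (a) D_f maps Z(P₁) into Z(P₁) for every f ∈ P₀; (b) for each ζ ∈ Z(P₁), the map (∂₀ζ)(f) := D_f ζ is an R-linear derivation P₀ → Z(P₁), and ∂₁(∂₀ζ) = 0, where (∂₁Q)(f,g) := D_f(Q g) − D_g(Q f) − Q({f,g}₀); (c) for every R-linear derivation Q : P₀ → Z(P₁), ∂₁Q is an antisymmetric R-bilinear map into Z(P₁) which is a derivation in each argument, and ∂₂(∂₁Q) = 0, where (∂₂B)(f,g,h) := D_f(B(g,h)) − D_g(B(f,h)) + D_h(B(f,g))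 − B({f,g}₀,h) + B({f,h}₀,g) − B({g,h}₀,f). (That is, the center-valued cochains form a cochain complex in degrees ≤ 2.) -/
variable {R P₀ P₁ : Type*} [CommRing R] [CommRing P₀] [Algebra R P₀]
  [AddCommGroup P₁] [Module R P₁] [Module P₀ P₁] [IsScalarTower R P₀ P₁]

/-- for a Poisson triple `([·,·]₁, D, K)` of `P = P₀ ⋉ P₁`, the
`Z(P₁)`-valued cochains form a cochain complex in degrees ≤ 2: `D` preserves the center,
`∂₀ζ = D_• ζ` is a center-valued derivation with `∂₁(∂₀ζ) = 0`, and for every center-valued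
derivation `Q` the 2-cochain `∂₁Q` is an antisymmetric biderivation into the center with
`∂₂(∂₁Q) = 0`. -/
theorem stmt5
    -- the Poisson algebra (P₀, {·,·}₀)
    (pb : P₀ →ₗ[R] P₀ →ₗ[R] P₀)
    (hpb_skew : ∀ f g, pb f g = - pb g f)
    (hpb_jac : ∀ f g h, pb f (pb g h) + pb g (pb h f) + pb h (pb f g) = 0)
    (hpb_leib : ∀ f g h, pb f (g * h) = pb f g * h + g * pb f h)
    -- the Poisson triple ([·,·]₁, D, K)
    (lb : P₁ →ₗ[P₀] P₁ →ₗ[P₀] P₁)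
    (hlb_skew : ∀ η ξ, lb η ξ = - lb ξ η)
    (hlb_jac : ∀ η ξ ζ, lb η (lb ξ ζ) + lb ξ (lb ζ η) + lb ζ (lb η ξ) = 0)
    (D : P₀ →ₗ[R] P₁ →ₗ[R] P₁)
    (hD_mul : ∀ f g η, D (f * g) η = f • D g η + g • D f η)
    (hD_leib : ∀ f g η, D f (g • η) = g • D f η + (pb f g) • η)
    (K : P₀ →ₗ[R] P₀ →ₗ[R] P₁)
    (hK_skew : ∀ f g, K f g = - K g f)
    (hK_der : ∀ f g h, K (f * g) h = f • K g h + g • K f h)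
    (hPT1 : ∀ f η ξ, D f (lb η ξ) = lb (D f η) ξ + lb η (D f ξ))
    (hPT2 : ∀ f g η, D f (D g η) - D g (D f η) - D (pb f g) η = lb (K f g) η)
    (hPT3 : ∀ f g h,
      D f (K g h) + D g (K h f) + D h (K f g)
        + K f (pb g h) + K g (pb h f) + K h (pb f g) = 0) :
    -- (a) D preserves the center Z(P₁)
    (∀ (f : P₀) (ζ : P₁), (∀ ξ, lb ζ ξ = 0) → ∀ ξ, lb (D f ζ) ξ = 0) ∧
    -- (b) ∂₀ζ = D_• ζ is an R-linear derivation P₀ → Z(P₁) with ∂₁(∂₀ζ) = 0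
    (∀ ζ : P₁, (∀ ξ, lb ζ ξ = 0) →
      (∀ f g : P₀, D (f + g) ζ = D f ζ + D g ζ) ∧
      (∀ (r : R) (f : P₀), D (r • f) ζ = r • D f ζ) ∧
      (∀ f g : P₀, D (f * g) ζ = f • D g ζ + g • D f ζ) ∧
      (∀ (f : P₀) (ξ : P₁), lb (D f ζ) ξ = 0) ∧
      (∀ f g : P₀, D f (D g ζ) - D g (D f ζ) - D (pb f g) ζ = 0)) ∧
    -- (c) for every R-linear derivation Q : P₀ → Z(P₁), the 2-cochain ∂₁Q is an
    -- antisymmetric biderivation into Z(P₁) with ∂₂(∂₁Q) = 0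
    (∀ Q : P₀ →ₗ[R] P₁, (∀ f g, Q (f * g) = f • Q g + g • Q f) →
      (∀ (f : P₀) (ξ : P₁), lb (Q f) ξ = 0) →
      ∀ B : P₀ → P₀ → P₁, (∀ f g, B f g = D f (Q g) - D g (Q f) - Q (pb f g)) →
        (∀ f g, B f g = - B g f) ∧
        (∀ (f g : P₀) (ξ : P₁), lb (B f g) ξ = 0) ∧
        (∀ f g h, B (f * g) h = f • B g h + g • B f h) ∧
        (∀ f g h, B f (g * h) = g • B f h + h • B f g) ∧
        (∀ f g h,
          D f (B g h) - D g (B f h) + D h (B f g)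
            - B (pb f g) h + B (pb f h) g - B (pb g h) f = 0)) := by

  -- (a)
  have ha : ∀ (f : P₀) (ζ : P₁), (∀ ξ, lb ζ ξ = 0) → ∀ ξ, lb (D f ζ) ξ = 0 := by
    intro f ζ hζ ξ
    have h := hPT1 f ζ ξ
    rw [hζ ξ, map_zero, hζ (D f ξ), add_zero] at h
    exact h.symm
  refine ⟨ha, ?_, ?_⟩
  · -- (b)
    intro ζ hζ
    refine ⟨fun f g => by rw [map_add, LinearMap.add_apply],
      fun r f => by rw [map_smul, LinearMap.smul_apply],
      fun f g => hD_mul f g ζ, fun f => ha f ζ hζ, fun f g => ?_⟩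
    rw [hPT2, hlb_skew, hζ, neg_zero]
  · -- (c)
    intro Q hQd hQc B hB
    have hanti : ∀ f g, B f g = - B g f := by
      intro f g
      rw [hB, hB, hpb_skew f g, map_neg]
      abel
    have hcen : ∀ (f g : P₀) (ξ : P₁), lb (B f g) ξ = 0 := by
      intro f g ξ
      rw [hB, map_sub, map_sub, LinearMap.sub_apply, LinearMap.sub_apply,
        ha f (Q g) (hQc g) ξ, ha g (Q f) (hQc f) ξ, hQc (pb f g) ξ]
      abel
    have hder1 : ∀ f g h, B (f * g) h = f • B g h + g • B f h := by
      intro f g h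
      rw [hB, hB, hB, hD_mul, hQd f g]
      rw [map_add, hD_leib, hD_leib]
      have h1 : pb (f * g) h = -(pb h f * g + f * pb h g) := by
        rw [hpb_skew (f*g) h, hpb_leib]
      rw [h1, map_neg, map_add, hQd (pb h f) g, hQd f (pb h g)]
      have e1 : Q (pb h f) = - Q (pb f h) := by rw [hpb_skew h f, map_neg]
      have e2 : Q (pb h g) = - Q (pb g h) := by rw [hpb_skew h g, map_neg]
      rw [e1, e2]
      module
    have hder2 : ∀ f g h, B f (g * h) = g • B f h + h • B f g := by
      intro f g h
      rw [hanti f (g*h), hder1 g h f, hanti h f, hanti g f]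
      module
    refine ⟨hanti, hcen, hder1, hder2, fun f g h => ?_⟩
    have c1 : D f (D g (Q h)) - D g (D f (Q h)) - D (pb f g) (Q h) = 0 := by
      rw [hPT2, hlb_skew, hQc, neg_zero]
    have c2 : D f (D h (Q g)) - D h (D f (Q g)) - D (pb f h) (Q g) = 0 := by
      rw [hPT2, hlb_skew, hQc, neg_zero]
    have c3 : D g (D h (Q f)) - D h (D g (Q f)) - D (pb g h) (Q f) = 0 := by
      rw [hPT2, hlb_skew, hQc, neg_zero]
    have hj : Q (pb f (pb g h)) + Q (pb g (pb h f)) + Q (pb h (pb f g)) = 0 := by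
      rw [← map_add, ← map_add, hpb_jac, map_zero]
    have e1 : Q (pb (pb f g) h) = - Q (pb h (pb f g)) := by
      rw [hpb_skew (pb f g) h, map_neg]
    have e2 : Q (pb (pb f h) g) = Q (pb g (pb h f)) := by
      rw [hpb_skew (pb f h) g, hpb_skew f h, map_neg, map_neg, map_neg, neg_neg]
    have e3 : Q (pb (pb g h) f) = - Q (pb f (pb g h)) := by
      rw [hpb_skew (pb g h) f, map_neg]
    rw [hB g h, hB f h, hB f g, hB (pb f g) h, hB (pb f h) g, hB (pb g h) f]
    rw [map_sub, map_sub, map_sub, map_sub, map_sub, map_sub]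
    rw [e1, e2, e3]
    linear_combination (norm := abel) c1 - c2 + c3 - hj
end

section
/- Let {·,·} be an admissible Poisson structure on P = P₀ ⋉ P₁ with Poisson triple ([·,·]₁, D, K). Let φ₀₀ : P₀ → P₀ be a bijective R-algebra homomorphism with φ₀₀({f,g}₀) = {φ₀₀f, φ₀₀g}₀; let φ₁₀ : P₀ → P₁ be R-linear with φ₁₀(f·g) = φ₀₀(f)·φ₁₀(g) + φ₀₀(g)·φ₁₀(f); let φ₁₁ : P₁ → P₁ be a bijective R-linear map with φ₁₁(f·η) = φ₀₀(f)·φ₁₁(η). Define the gauge transformation φ(f,η) := (φ₀₀f, φ₁₀f + φ₁₁η) and the bracket {π₁,π₂}' := φ⁻¹({φ(π₁), φ(π₂)}). Then {·,·}' is an admissible Poisson structure on P, and its Poisson triple ([·,·]₁', D', K') is given by: [η,ξ]₁' = φ₁₁⁻¹([φ₁₁η, φ₁₁ξ]₁); D'_f η = φ₁₁⁻¹(D_{φ₀₀f}(φ₁₁η) + [φ₁₀f, φ₁₁η]₁); K'(f,g) = φ₁₁⁻¹(K(φ₀₀f, φ₀₀g) + D_{φ₀₀f}(φ₁₀g) −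 D_{φ₀₀g}(φ₁₀f) + [φ₁₀f, φ₁₀g]₁ − φ₁₀({f,g}₀)). -/
variable {R P₀ P₁ : Type*} [CommRing R] [CommRing P₀] [Algebra R P₀]
  [AddCommGroup P₁] [Module R P₁] [Module P₀ P₁] [IsScalarTower R P₀ P₁]

/-- the bracket `{·,·}'` obtained from an admissible Poisson structure `{·,·}` by
conjugating with a gauge transformation `φ(f,η) = (φ₀₀f, φ₁₀f + φ₁₁η)` is again an admissible
Poisson structure, and its Poisson triple is given by the stated transition formulas
(expressed here by applying the bijection `φ₁₁` to both sides). -/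
theorem stmt7
    -- the Poisson algebra (P₀, {·,·}₀)
    (pb : P₀ →ₗ[R] P₀ →ₗ[R] P₀)
    (hpb_skew : ∀ f g, pb f g = - pb g f)
    (hpb_jac : ∀ f g h, pb f (pb g h) + pb g (pb h f) + pb h (pb f g) = 0)
    (hpb_leib : ∀ f g h, pb f (g * h) = pb f g * h + g * pb f h)
    -- the admissible Poisson structure {·,·} on P
    (br : (P₀ × P₁) →ₗ[R] (P₀ × P₁) →ₗ[R] P₀ × P₁)
    (hbr_skew : ∀ a b, br a b = - br b a)
    (hbr_jac : ∀ a b c, br a (br b c) + br b (br c a) + br c (br a b) = 0)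
    (hbr_leib : ∀ a b c, br a (tmul b c) = tmul (br a b) c + tmul b (br a c))
    (hbr_adm : ∀ (f g : P₀) (η ξ : P₁), (br (f, η) (g, ξ)).1 = pb f g)
    -- its Poisson triple ([·,·]₁, D, K)
    (lb : P₁ → P₁ → P₁) (hlb : ∀ η ξ, lb η ξ = (br (0, η) (0, ξ)).2)
    (D : P₀ → P₁ → P₁) (hD : ∀ f η, D f η = (br (f, 0) (0, η)).2)
    (K : P₀ → P₀ → P₁) (hK : ∀ f g, K f g = (br (f, 0) (g, 0)).2)
    -- the gauge transformation data
    (φ00 : P₀ →ₐ[R] P₀) (hφ00_bij : Function.Bijective φ00)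
    (hφ00_pois : ∀ f g, φ00 (pb f g) = pb (φ00 f) (φ00 g))
    (φ10 : P₀ →ₗ[R] P₁)
    (hφ10_der : ∀ f g, φ10 (f * g) = φ00 f • φ10 g + φ00 g • φ10 f)
    (φ11 : P₁ →ₗ[R] P₁) (hφ11_bij : Function.Bijective φ11)
    (hφ11_semilin : ∀ (f : P₀) (η : P₁), φ11 (f • η) = φ00 f • φ11 η)
    (Φ : P₀ × P₁ → P₀ × P₁)
    (hΦ : ∀ (f : P₀) (η : P₁), Φ (f, η) = (φ00 f, φ10 f + φ11 η))
    -- the transformed bracket {·,·}' defined by {π₁,π₂}' = φ⁻¹{φπ₁,φπ₂}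
    (br' : P₀ × P₁ → P₀ × P₁ → P₀ × P₁)
    (hbr' : ∀ a b, Φ (br' a b) = br (Φ a) (Φ b)) :
    -- {·,·}' is R-bilinear
    (∀ a b c : P₀ × P₁, br' (a + b) c = br' a c + br' b c) ∧
    (∀ (r : R) (a b : P₀ × P₁), br' (r • a) b = r • br' a b) ∧
    (∀ a b c : P₀ × P₁, br' a (b + c) = br' a b + br' a c) ∧
    (∀ (r : R) (a b : P₀ × P₁), br' a (r • b) = r • br' a b) ∧
    -- antisymmetric, Jacobi, Leibniz, admissible
    (∀ a b : P₀ × P₁, br' a b = - br' b a) ∧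
    (∀ a b c : P₀ × P₁, br' a (br' b c) + br' b (br' c a) + br' c (br' a b) = 0) ∧
    (∀ a b c : P₀ × P₁, br' a (tmul b c) = tmul (br' a b) c + tmul b (br' a c)) ∧
    (∀ (f g : P₀) (η ξ : P₁), (br' (f, η) (g, ξ)).1 = pb f g) ∧
    -- the Poisson triple of {·,·}': [η,ξ]₁' = φ₁₁⁻¹[φ₁₁η,φ₁₁ξ]₁
    (∀ η ξ : P₁, φ11 ((br' (0, η) (0, ξ)).2) = lb (φ11 η) (φ11 ξ)) ∧
    -- D'_f η = φ₁₁⁻¹(D_{φ₀₀f}(φ₁₁η) + [φ₁₀f, φ₁₁η]₁)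
    (∀ (f : P₀) (η : P₁),
      φ11 ((br' (f, 0) (0, η)).2) = D (φ00 f) (φ11 η) + lb (φ10 f) (φ11 η)) ∧
    -- K'(f,g) = φ₁₁⁻¹(K(φ₀₀f,φ₀₀g) + D_{φ₀₀f}(φ₁₀g) − D_{φ₀₀g}(φ₁₀f) + [φ₁₀f,φ₁₀g]₁ − φ₁₀{f,g}₀)
    (∀ f g : P₀,
      φ11 ((br' (f, 0) (g, 0)).2) =
        K (φ00 f) (φ00 g) + D (φ00 f) (φ10 g) - D (φ00 g) (φ10 f)
          + lb (φ10 f) (φ10 g) - φ10 (pb f g)) := by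

  -- Basic facts about Φ
  have hΦzero : Φ 0 = 0 := by
    have h := hΦ 0 0
    simp at h; exact h
  have hΦadd : ∀ a b : P₀ × P₁, Φ (a + b) = Φ a + Φ b := by
    rintro ⟨f, η⟩ ⟨g, ξ⟩
    rw [Prod.mk_add_mk, hΦ, hΦ, hΦ, Prod.mk_add_mk, map_add, map_add, map_add,
      Prod.mk.injEq]
    exact ⟨rfl, by abel⟩
  have hΦsmul : ∀ (r : R) (a : P₀ × P₁), Φ (r • a) = r • Φ a := by
    rintro r ⟨f, η⟩
    rw [Prod.smul_mk, hΦ, hΦ, Prod.smul_mk, map_smul, map_smul, map_smul,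
      smul_add, Prod.mk.injEq]
    exact ⟨rfl, rfl⟩
  have hΦneg : ∀ a : P₀ × P₁, Φ (-a) = - Φ a := by
    rintro ⟨f, η⟩
    rw [Prod.neg_mk, hΦ, hΦ, Prod.neg_mk, map_neg, map_neg, map_neg, Prod.mk.injEq]
    exact ⟨rfl, by abel⟩
  have hΦinj : ∀ a b : P₀ × P₁, Φ a = Φ b → a = b := by
    rintro ⟨f, η⟩ ⟨g, ξ⟩ h
    rw [hΦ, hΦ, Prod.mk.injEq] at h
    obtain ⟨h1, h2⟩ := h
    have hfg : f = g := hφ00_bij.injective h1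
    subst hfg
    have h3 : φ11 η = φ11 ξ := by
      have := add_left_cancel h2
      exact this
    exact Prod.ext rfl (hφ11_bij.injective h3)
  have hΦtmul : ∀ a b : P₀ × P₁, Φ (tmul a b) = tmul (Φ a) (Φ b) := by
    rintro ⟨f, η⟩ ⟨g, ξ⟩
    rw [tmul, hΦ, hΦ, hΦ, tmul, Prod.mk.injEq]
    refine ⟨map_mul _ _ _, ?_⟩
    rw [map_add, hφ10_der, hφ11_semilin, hφ11_semilin]
    simp only [smul_add]
    abel
  have hΦfst : ∀ a : P₀ × P₁, (Φ a).1 = φ00 a.1 := by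
    rintro ⟨f, η⟩; rw [hΦ]
  have hΦsnd : ∀ a : P₀ × P₁, (Φ a).2 = φ10 a.1 + φ11 a.2 := by
    rintro ⟨f, η⟩; rw [hΦ]
  -- admissibility of br'
  have adm' : ∀ (f g : P₀) (η ξ : P₁), (br' (f, η) (g, ξ)).1 = pb f g := by
    intro f g η ξ
    apply hφ00_bij.injective
    have h := congrArg Prod.fst (hbr' (f, η) (g, ξ))
    rw [hΦfst] at h
    rw [h, hΦ, hΦ, hbr_adm, hφ00_pois]
  -- bilinearity
  have h_add_left : ∀ a b c : P₀ × P₁, br' (a + b) c = br' a c + br' b c := by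
    intro a b c
    apply hΦinj
    rw [hΦadd, hbr', hbr', hbr', hΦadd, map_add, LinearMap.add_apply]
  have h_smul_left : ∀ (r : R) (a b : P₀ × P₁), br' (r • a) b = r • br' a b := by
    intro r a b
    apply hΦinj
    rw [hΦsmul, hbr', hbr', hΦsmul, map_smul, LinearMap.smul_apply]
  have h_add_right : ∀ a b c : P₀ × P₁, br' a (b + c) = br' a b + br' a c := by
    intro a b c
    apply hΦinj
    rw [hΦadd, hbr', hbr', hbr', hΦadd, map_add]
  have h_smul_right : ∀ (r : R) (a b : P₀ × P₁), br' a (r • b) = r • br' a b := by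
    intro r a b
    apply hΦinj
    rw [hΦsmul, hbr', hbr', hΦsmul, map_smul]
  have h_skew : ∀ a b : P₀ × P₁, br' a b = - br' b a := by
    intro a b
    apply hΦinj
    rw [hΦneg, hbr', hbr', hbr_skew]
  have h_jac : ∀ a b c : P₀ × P₁,
      br' a (br' b c) + br' b (br' c a) + br' c (br' a b) = 0 := by
    intro a b c
    apply hΦinj
    rw [hΦzero, hΦadd, hΦadd, hbr', hbr', hbr', hbr', hbr', hbr']
    exact hbr_jac (Φ a) (Φ b) (Φ c)
  have h_leib : ∀ a b c : P₀ × P₁,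
      br' a (tmul b c) = tmul (br' a b) c + tmul b (br' a c) := by
    intro a b c
    apply hΦinj
    rw [hΦadd, hΦtmul, hΦtmul, hbr', hbr', hbr', hΦtmul, hbr_leib]
  -- images of special points
  have hΦe1 : ∀ η : P₁, Φ (0, η) = (0, φ11 η) := by
    intro η; rw [hΦ]; simp
  have hΦe0 : ∀ f : P₀, Φ (f, 0) = (φ00 f, φ10 f) := by
    intro f; rw [hΦ]; simp
  have hsplit : ∀ (f : P₀) (η : P₁), ((f, η) : P₀ × P₁) = (f, 0) + (0, η) := by
    intro f η; simp
  -- bracket formula: [·,·]₁'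
  have h_lb : ∀ η ξ : P₁, φ11 ((br' (0, η) (0, ξ)).2) = lb (φ11 η) (φ11 ξ) := by
    intro η ξ
    have h := hbr' (0, η) (0, ξ)
    rw [hΦe1, hΦe1] at h
    have h1 : (br' ((0 : P₀), η) (0, ξ)).1 = 0 := by
      have := adm' 0 0 η ξ
      simpa using this
    have h2 := congrArg Prod.snd h
    rw [hΦsnd, h1, map_zero, zero_add] at h2
    rw [h2, hlb]
  -- D'
  have h_D : ∀ (f : P₀) (η : P₁),
      φ11 ((br' (f, 0) (0, η)).2) = D (φ00 f) (φ11 η) + lb (φ10 f) (φ11 η) := by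
    intro f η
    have h := hbr' (f, 0) (0, η)
    rw [hΦe0, hΦe1] at h
    have hdec : br ((φ00 f, φ10 f) : P₀ × P₁) ((0 : P₀), φ11 η)
        = br (φ00 f, 0) (0, φ11 η) + br (0, φ10 f) (0, φ11 η) := by
      rw [hsplit (φ00 f) (φ10 f)]
      simp only [map_add, LinearMap.add_apply]
    rw [hdec] at h
    have h1 : (br' ((f : P₀), (0 : P₁)) ((0 : P₀), η)).1 = 0 := by
      have := adm' f 0 0 η
      simpa using this
    have h2 := congrArg Prod.snd h
    rw [hΦsnd, h1, map_zero, zero_add, Prod.snd_add] at h2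
    rw [h2, hD, hlb]
  -- K'
  have h_K : ∀ f g : P₀,
      φ11 ((br' (f, 0) (g, 0)).2) =
        K (φ00 f) (φ00 g) + D (φ00 f) (φ10 g) - D (φ00 g) (φ10 f)
          + lb (φ10 f) (φ10 g) - φ10 (pb f g) := by
    intro f g
    have h := hbr' (f, 0) (g, 0)
    rw [hΦe0, hΦe0] at h
    have hdec : br ((φ00 f, φ10 f) : P₀ × P₁) ((φ00 g, φ10 g) : P₀ × P₁)
        = br (φ00 f, 0) (φ00 g, 0) + br (φ00 f, 0) (0, φ10 g)
          + br (0, φ10 f) (φ00 g, 0) + br (0, φ10 f) (0, φ10 g) := by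
      rw [hsplit (φ00 f) (φ10 f), hsplit (φ00 g) (φ10 g)]
      simp only [map_add, LinearMap.add_apply]
      abel
    rw [hdec] at h
    have h1 : (br' ((f : P₀), (0 : P₁)) ((g : P₀), (0 : P₁))).1 = pb f g :=
      adm' f g 0 0
    have h2 := congrArg Prod.snd h
    rw [hΦsnd, h1, Prod.snd_add, Prod.snd_add, Prod.snd_add] at h2
    have h3 : (br ((0 : P₀), φ10 f) ((φ00 g : P₀), (0 : P₁))).2
        = - D (φ00 g) (φ10 f) := by
      rw [hbr_skew, Prod.snd_neg, hD]
    rw [h3] at h2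
    have h4 : φ11 ((br' ((f : P₀), (0 : P₁)) ((g : P₀), (0 : P₁))).2)
        = (br (φ00 f, 0) (φ00 g, 0)).2 + (br (φ00 f, 0) (0, φ10 g)).2
          + -D (φ00 g) (φ10 f) + (br ((0 : P₀), φ10 f) ((0 : P₀), φ10 g)).2
          - φ10 (pb f g) := by
      rw [← h2]; abel
    rw [h4, ← hK, ← hD, ← hlb]
    abel
  exact ⟨h_add_left, h_smul_left, h_add_right, h_smul_right, h_skew, h_jac,
    h_leib, adm', h_lb, h_D, h_K⟩
end

section
/- Let {·,·} and {·,·}' be admissible Poisson structures on P = P₀ ⋉ P₁ whose Poisson triples are ([·,·]₁, D, K) and ([·,·]₁, D, K') respectively (same P₀-linear Lie bracket on P₁ and same contravariant derivative D), and assume D is flat: D_f∘D_g − D_g∘D_f = D_{{f,g}₀} for all f,g ∈ P₀. Then there exists an R-linear derivation φ₁₀ : P₀ → P₁ (φ₁₀(f·g) = f·φ₁₀(g) + g·φ₁₀(f)) such that the gauge transformation φ(f,η) := (f, φ₁₀f + η) is a Poisson isomorphism from (P,{·,·}') to (P,{·,·}) (i.e. φ({π₁,π₂}') = {φπ₁,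 φπ₂}) if and only if there exists an R-linear derivation Q : P₀ → P₁ with values in the center Z(P₁) of (P₁,[·,·]₁) such that K'(f,g) − K(f,g) = D_f(Q g) − D_g(Q f) − Q({f,g}₀) for all f,g ∈ P₀. -/
variable {R P₀ P₁ : Type*} [CommRing R] [CommRing P₀] [Algebra R P₀]
  [AddCommGroup P₁] [Module R P₁] [Module P₀ P₁] [IsScalarTower R P₀ P₁]

lemma br_split
    (pb : P₀ →ₗ[R] P₀ →ₗ[R] P₀)
    (br : (P₀ × P₁) →ₗ[R] (P₀ × P₁) →ₗ[R] P₀ × P₁)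
    (hbr_skew : ∀ a b, br a b = - br b a)
    (hbr_adm : ∀ (f g : P₀) (η ξ : P₁), (br (f, η) (g, ξ)).1 = pb f g)
    (lb : P₁ → P₁ → P₁)
    (hlb : ∀ η ξ, lb η ξ = (br (0, η) (0, ξ)).2)
    (D : P₀ → P₁ → P₁)
    (hD : ∀ f η, D f η = (br (f, 0) (0, η)).2)
    (K : P₀ → P₀ → P₁) (hK : ∀ f g, K f g = (br (f, 0) (g, 0)).2)
    (f : P₀) (η : P₁) (g : P₀) (ξ : P₁) :
    br (f, η) (g, ξ) = (pb f g, D f ξ - D g η + lb η ξ + K f g) := by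
  have hb1 : br (f,(0:P₁)) (g,0) = (pb f g, K f g) := by
    refine Prod.ext ?_ ?_
    · exact hbr_adm f g 0 0
    · exact (hK f g).symm
  have hb2 : br (f,(0:P₁)) ((0 : P₀), ξ) = (0, D f ξ) := by
    refine Prod.ext ?_ ?_
    · simpa using hbr_adm f 0 0 ξ
    · exact (hD f ξ).symm
  have hb3 : br ((0:P₀), η) (g,0) = (0, -(D g η)) := by
    rw [hbr_skew]
    have h : br (g, (0:P₁)) ((0:P₀), η) = (0, D g η) := by
      refine Prod.ext ?_ ?_
      · simpa using hbr_adm g 0 0 η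
      · exact (hD g η).symm
    rw [h]
    simp [Prod.ext_iff]
  have hb4 : br ((0:P₀), η) ((0:P₀), ξ) = (0, lb η ξ) := by
    refine Prod.ext ?_ ?_
    · simpa using hbr_adm 0 0 η ξ
    · exact (hlb η ξ).symm
  have e1 : ((f, η) : P₀ × P₁) = (f, 0) + (0, η) := by simp
  have e2 : ((g, ξ) : P₀ × P₁) = (g, 0) + (0, ξ) := by simp
  rw [e1, e2]
  simp only [map_add, LinearMap.add_apply, hb1, hb2, hb3, hb4]
  refine Prod.ext ?_ ?_
  · simp
  · simp only [Prod.snd_add]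
    abel

/-- two admissible Poisson structures with the same Lie bracket on `P₁` and the
same flat contravariant derivative `D` are isomorphic via a gauge transformation
`φ(f,η) = (f, φ₁₀f + η)` if and only if the difference `K' − K` is a `∂_D`-coboundary of a
center-valued derivation. -/
theorem stmt8
    -- the Poisson algebra (P₀, {·,·}₀)
    (pb : P₀ →ₗ[R] P₀ →ₗ[R] P₀)
    (hpb_skew : ∀ f g, pb f g = - pb g f)
    (hpb_jac : ∀ f g h, pb f (pb g h) + pb g (pb h f) + pb h (pb f g) = 0)
    (hpb_leib : ∀ f g h, pb f (g * h) = pb f g * h + g * pb f h)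
    -- the admissible Poisson structure {·,·}
    (br : (P₀ × P₁) →ₗ[R] (P₀ × P₁) →ₗ[R] P₀ × P₁)
    (hbr_skew : ∀ a b, br a b = - br b a)
    (hbr_jac : ∀ a b c, br a (br b c) + br b (br c a) + br c (br a b) = 0)
    (hbr_leib : ∀ a b c, br a (tmul b c) = tmul (br a b) c + tmul b (br a c))
    (hbr_adm : ∀ (f g : P₀) (η ξ : P₁), (br (f, η) (g, ξ)).1 = pb f g)
    -- the admissible Poisson structure {·,·}'
    (br' : (P₀ × P₁) →ₗ[R] (P₀ × P₁) →ₗ[R] P₀ × P₁)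
    (hbr'_skew : ∀ a b, br' a b = - br' b a)
    (hbr'_jac : ∀ a b c, br' a (br' b c) + br' b (br' c a) + br' c (br' a b) = 0)
    (hbr'_leib : ∀ a b c, br' a (tmul b c) = tmul (br' a b) c + tmul b (br' a c))
    (hbr'_adm : ∀ (f g : P₀) (η ξ : P₁), (br' (f, η) (g, ξ)).1 = pb f g)
    -- the Poisson triples: same bracket [·,·]₁ on P₁ and same D, with K and K'
    (lb : P₁ → P₁ → P₁)
    (hlb : ∀ η ξ, lb η ξ = (br (0, η) (0, ξ)).2)
    (hlb' : ∀ η ξ, lb η ξ = (br' (0, η) (0, ξ)).2)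
    (D : P₀ → P₁ → P₁)
    (hD : ∀ f η, D f η = (br (f, 0) (0, η)).2)
    (hD' : ∀ f η, D f η = (br' (f, 0) (0, η)).2)
    (K : P₀ → P₀ → P₁) (hK : ∀ f g, K f g = (br (f, 0) (g, 0)).2)
    (K' : P₀ → P₀ → P₁) (hK' : ∀ f g, K' f g = (br' (f, 0) (g, 0)).2)
    -- flatness of D
    (hD_flat : ∀ f g η, D f (D g η) - D g (D f η) = D (pb f g) η) :
    -- gauge equivalence ↔ exactness of Δ(K' − K)
    ((∃ φ10 : P₀ →ₗ[R] P₁,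
        (∀ f g, φ10 (f * g) = f • φ10 g + g • φ10 f) ∧
        Function.Bijective (fun p : P₀ × P₁ => (p.1, φ10 p.1 + p.2)) ∧
        (∀ a b : P₀ × P₁,
          (fun p : P₀ × P₁ => (p.1, φ10 p.1 + p.2)) (tmul a b) =
            tmul ((fun p : P₀ × P₁ => (p.1, φ10 p.1 + p.2)) a)
              ((fun p : P₀ × P₁ => (p.1, φ10 p.1 + p.2)) b)) ∧
        (∀ a b : P₀ × P₁,
          (fun p : P₀ × P₁ => (p.1, φ10 p.1 + p.2)) (br' a b) =
            br ((fun p : P₀ × P₁ => (p.1, φ10 p.1 + p.2)) a)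
              ((fun p : P₀ × P₁ => (p.1, φ10 p.1 + p.2)) b))) ↔
      (∃ Q : P₀ →ₗ[R] P₁,
        (∀ f g, Q (f * g) = f • Q g + g • Q f) ∧
        (∀ (f : P₀) (ξ : P₁), lb (Q f) ξ = 0) ∧
        (∀ f g, K' f g - K f g = D f (Q g) - D g (Q f) - Q (pb f g)))) := by

  clear hpb_skew hpb_jac hpb_leib hbr_jac hbr_leib hbr'_jac hbr'_leib hD_flat
  have split : ∀ f η g ξ, br (f, η) (g, ξ) = (pb f g, D f ξ - D g η + lb η ξ + K f g) :=
    fun f η g ξ => br_split pb br hbr_skew hbr_adm lb hlb D hD K hK f η g ξ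
  have split' : ∀ f η g ξ, br' (f, η) (g, ξ) = (pb f g, D f ξ - D g η + lb η ξ + K' f g) :=
    fun f η g ξ => br_split pb br' hbr'_skew hbr'_adm lb hlb' D hD' K' hK' f η g ξ
  have hD0 : ∀ f, D f 0 = 0 := by
    intro f; rw [hD]
    rw [show ((0:P₀), (0:P₁)) = (0 : P₀ × P₁) from rfl, map_zero]; rfl
  have hD0' : ∀ η, D 0 η = 0 := by
    intro η; rw [hD]
    rw [show ((0:P₀), (0:P₁)) = (0 : P₀ × P₁) from rfl, map_zero]; rfl
  have hlb0l : ∀ ξ, lb 0 ξ = 0 := by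
    intro ξ; rw [hlb]
    rw [show ((0:P₀), (0:P₁)) = (0 : P₀ × P₁) from rfl, map_zero]; rfl
  have hlb0r : ∀ η, lb η 0 = 0 := by
    intro η; rw [hlb]
    rw [show ((0:P₀), (0:P₁)) = (0 : P₀ × P₁) from rfl, map_zero]; rfl
  have hK0 : ∀ f, K f 0 = 0 := by
    intro f; rw [hK]
    rw [show ((0:P₀), (0:P₁)) = (0 : P₀ × P₁) from rfl, map_zero]; rfl
  have hK'0 : ∀ f, K' f 0 = 0 := by
    intro f; rw [hK']
    rw [show ((0:P₀), (0:P₁)) = (0 : P₀ × P₁) from rfl, map_zero]; rfl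
  have hDadd : ∀ f η ξ, D f (η + ξ) = D f η + D f ξ := by
    intro f η ξ
    rw [hD, hD, hD, show ((0:P₀), η + ξ) = ((0:P₀), η) + ((0:P₀), ξ) from by simp, map_add]
    rfl
  have hlb_addl : ∀ a b c, lb (a + b) c = lb a c + lb b c := by
    intro a b c
    rw [hlb, hlb, hlb, show ((0:P₀), a + b) = ((0:P₀), a) + ((0:P₀), b) from by simp,
      map_add, LinearMap.add_apply]
    rfl
  have hlb_addr : ∀ a b c, lb a (b + c) = lb a b + lb a c := by
    intro a b c
    rw [hlb, hlb, hlb, show ((0:P₀), b + c) = ((0:P₀), b) + ((0:P₀), c) from by simp, map_add]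
    rfl
  have hlb_skew : ∀ a b, lb a b = - lb b a := by
    intro a b
    rw [hlb a b, hlb b a, hbr_skew]
    rfl
  constructor
  · rintro ⟨φ10, hder, -, -, hpois⟩
    have hcen : ∀ (f : P₀) (ξ : P₁), lb (φ10 f) ξ = 0 := by
      intro f ξ
      have h := hpois (f, 0) (0, ξ)
      simp only at h
      rw [split' f 0 0 ξ, map_zero, split f (φ10 f + 0) 0 (φ10 0 + ξ)] at h
      have h2 := congrArg Prod.snd h
      simp only [map_zero, add_zero, zero_add, hD0, hD0', hlb0l, hK0, hK'0, sub_zero] at h2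
      rwa [left_eq_add] at h2
    refine ⟨φ10, hder, hcen, ?_⟩
    intro f g
    have h := hpois (f, 0) (g, 0)
    simp only at h
    rw [split' f 0 g 0, split f (φ10 f + 0) g (φ10 g + 0)] at h
    have h2 := congrArg Prod.snd h
    simp only [add_zero, hD0, hlb0l, sub_zero, zero_add, hcen] at h2
    rw [show K' f g = (D f (φ10 g) - D g (φ10 f) + K f g) - φ10 (pb f g) from by
      rw [← h2]; abel]
    abel
  · rintro ⟨Q, hder, hcen, hcob⟩
    refine ⟨Q, hder, ?_, ?_, ?_⟩
    · refine Function.bijective_iff_has_inverse.mpr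
        ⟨fun p => (p.1, p.2 - Q p.1), ?_, ?_⟩ <;>
        intro p <;> simp [Prod.ext_iff]
    · intro a b
      simp only [tmul]
      refine Prod.ext rfl ?_
      simp only [hder, smul_add]
      abel
    · rintro ⟨f, η⟩ ⟨g, ξ⟩
      simp only
      rw [split' f η g ξ, split f (Q f + η) g (Q g + ξ)]
      refine Prod.ext rfl ?_
      have hK'eq : K' f g = D f (Q g) - D g (Q f) - Q (pb f g) + K f g :=
        eq_add_of_sub_eq (hcob f g)
      have hlbη : lb η (Q g) = 0 := by rw [hlb_skew, hcen, neg_zero]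
      rw [hK'eq, hDadd, hDadd, hlb_addl, hlb_addr, hlb_addr, hcen, hcen, hlbη]
      dsimp only
      abel
end

section
/- Let {·,·} be an admissible Poisson structure on P = P₀ ⋉ P₁ with Poisson triple ([·,·]₁, D, K), and let C : P₀ × P₀ → P₁ be an R-bilinear antisymmetric map with values in the center Z(P₁) of (P₁,[·,·]₁), which is a derivation in each argument (C(f·g,h) = f·C(g,h) + g·C(f,h)) and satisfies the 2-cocycle condition D_f(C(g,h)) − D_g(C(f,h)) + D_h(C(f,g)) − C({f,g}₀,h) + C({f,h}₀,g) − C({g,h}₀,f) = 0 for all f,g,h ∈ P₀. Then: (1) for every t ∈ R the bracket {(f,η),(g,ξ)}ᵗ := {(f,η),(g,ξ)} + (0, t·C(f,g)) is an admissible Poisson structure on P; (2) there exist, for every t ∈ R, an R-linear derivation μ_t : P₀ → P₁ such that the gauge transformation φ_t(f,η) := (f, μ_t(f) + η) is a Poisson isomorphism from (P,{·,·}ᵗ) to (P,{·,·}), if and only if there exists an R-linear derivation ϑ : P₀ → Z(P₁) with C(f,g) = D_f(ϑ g) − D_g(ϑ f) − ϑ({f,g}₀) for all f,g ∈ P₀.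 -/
variable {R P₀ P₁ : Type*} [CommRing R] [CommRing P₀] [Algebra R P₀]
  [AddCommGroup P₁] [Module R P₁] [Module P₀ P₁] [IsScalarTower R P₀ P₁]

/-- every center-valued 2-cocycle `C` deforms an admissible Poisson structure into
a `t`-parameterized family `{·,·}ᵗ = {·,·} + (0, t·C)` of admissible Poisson structures, and the
family is trivialized by μ-gauge transformations iff `C` is a `∂_D`-coboundary. -/
theorem stmt9
    -- the Poisson algebra (P₀, {·,·}₀)
    (pb : P₀ →ₗ[R] P₀ →ₗ[R] P₀)
    (hpb_skew : ∀ f g, pb f g = - pb g f)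
    (hpb_jac : ∀ f g h, pb f (pb g h) + pb g (pb h f) + pb h (pb f g) = 0)
    (hpb_leib : ∀ f g h, pb f (g * h) = pb f g * h + g * pb f h)
    -- the admissible Poisson structure {·,·}
    (br : (P₀ × P₁) →ₗ[R] (P₀ × P₁) →ₗ[R] P₀ × P₁)
    (hbr_skew : ∀ a b, br a b = - br b a)
    (hbr_jac : ∀ a b c, br a (br b c) + br b (br c a) + br c (br a b) = 0)
    (hbr_leib : ∀ a b c, br a (tmul b c) = tmul (br a b) c + tmul b (br a c))
    (hbr_adm : ∀ (f g : P₀) (η ξ : P₁), (br (f, η) (g, ξ)).1 = pb f g)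
    -- its Poisson triple ([·,·]₁, D, K)
    (lb : P₁ → P₁ → P₁) (hlb : ∀ η ξ, lb η ξ = (br (0, η) (0, ξ)).2)
    (D : P₀ → P₁ → P₁) (hD : ∀ f η, D f η = (br (f, 0) (0, η)).2)
    (K : P₀ → P₀ → P₁) (hK : ∀ f g, K f g = (br (f, 0) (g, 0)).2)
    -- the center-valued 2-cocycle C
    (C : P₀ →ₗ[R] P₀ →ₗ[R] P₁)
    (hC_skew : ∀ f g, C f g = - C g f)
    (hC_central : ∀ (f g : P₀) (ξ : P₁), lb (C f g) ξ = 0)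
    (hC_der : ∀ f g h, C (f * g) h = f • C g h + g • C f h)
    (hC_cocycle : ∀ f g h,
      D f (C g h) - D g (C f h) + D h (C f g)
        - C (pb f g) h + C (pb f h) g - C (pb g h) f = 0)
    -- the deformed brackets {·,·}ᵗ
    (brt : R → P₀ × P₁ → P₀ × P₁ → P₀ × P₁)
    (hbrt : ∀ (t : R) (a b : P₀ × P₁), brt t a b = br a b + ((0 : P₀), t • C a.1 b.1)) :
    -- (1) for every t, {·,·}ᵗ is an admissible Poisson structure on P
    ((∀ t : R,
      (∀ a b c : P₀ × P₁, brt t (a + b) c = brt t a c + brt t b c) ∧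
      (∀ (r : R) (a b : P₀ × P₁), brt t (r • a) b = r • brt t a b) ∧
      (∀ a b c : P₀ × P₁, brt t a (b + c) = brt t a b + brt t a c) ∧
      (∀ (r : R) (a b : P₀ × P₁), brt t a (r • b) = r • brt t a b) ∧
      (∀ a b : P₀ × P₁, brt t a b = - brt t b a) ∧
      (∀ a b c : P₀ × P₁,
        brt t a (brt t b c) + brt t b (brt t c a) + brt t c (brt t a b) = 0) ∧
      (∀ a b c : P₀ × P₁, brt t a (tmul b c) = tmul (brt t a b) c + tmul b (brt t a c)) ∧
      (∀ (f g : P₀) (η ξ : P₁), (brt t (f, η) (g, ξ)).1 = pb f g))) ∧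
    -- (2) the deformation is trivializable by μ-gauge transformations iff C is exact
    ((∀ t : R, ∃ μ : P₀ →ₗ[R] P₁,
        (∀ f g, μ (f * g) = f • μ g + g • μ f) ∧
        (∀ a b : P₀ × P₁,
          (fun p : P₀ × P₁ => (p.1, μ p.1 + p.2)) (brt t a b) =
            br ((fun p : P₀ × P₁ => (p.1, μ p.1 + p.2)) a)
              ((fun p : P₀ × P₁ => (p.1, μ p.1 + p.2)) b))) ↔
      (∃ ϑ : P₀ →ₗ[R] P₁,
        (∀ f g, ϑ (f * g) = f • ϑ g + g • ϑ f) ∧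
        (∀ (f : P₀) (ξ : P₁), lb (ϑ f) ξ = 0) ∧
        (∀ f g, C f g = D f (ϑ g) - D g (ϑ f) - ϑ (pb f g)))) := by
  classical
  -- basic component lemmas
  have pair_eq : ∀ x : P₀ × P₁, ((x.1, (0:P₁)) : P₀ × P₁) + ((0:P₀), x.2) = x := by
    intro x; ext <;> simp
  have hb1 : ∀ a b : P₀ × P₁, (br a b).1 = pb a.1 b.1 := fun a b => hbr_adm a.1 b.1 a.2 b.2
  have hzero : ((0:P₀), (0:P₁)) = (0 : P₀ × P₁) := rfl
  have hD_add : ∀ (f : P₀) (ζ ζ' : P₁), D f (ζ + ζ') = D f ζ + D f ζ' := by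
    intro f ζ ζ'
    rw [hD, hD, hD, show ((0:P₀), ζ + ζ') = ((0:P₀), ζ) + ((0:P₀), ζ') from by ext <;> simp,
      map_add, Prod.snd_add]
  have hD_smul : ∀ (t : R) (f : P₀) (ζ : P₁), D f (t • ζ) = t • D f ζ := by
    intro t f ζ
    rw [hD, hD, show ((0:P₀), t • ζ) = t • ((0:P₀), ζ) from by ext <;> simp, map_smul,
      Prod.smul_snd]
  have hD_neg : ∀ (f : P₀) (ζ : P₁), D f (-ζ) = - D f ζ := by
    intro f ζ
    rw [hD, hD, show ((0:P₀), -ζ) = -((0:P₀), ζ) from by ext <;> simp, map_neg, Prod.snd_neg]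
  have hD0 : ∀ f : P₀, D f (0:P₁) = 0 := by
    intro f; rw [hD, hzero, map_zero]; rfl
  have hD0' : ∀ η : P₁, D (0:P₀) η = 0 := by
    intro η; rw [hD, hzero, map_zero, LinearMap.zero_apply]; rfl
  have hlb_skew : ∀ η ξ : P₁, lb η ξ = - lb ξ η := by
    intro η ξ; rw [hlb, hlb, hbr_skew, Prod.snd_neg]
  have hlb_addl : ∀ η η' ξ : P₁, lb (η + η') ξ = lb η ξ + lb η' ξ := by
    intro η η' ξ
    rw [hlb, hlb, hlb, show ((0:P₀), η + η') = ((0:P₀), η) + ((0:P₀), η') from by ext <;> simp,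
      map_add, LinearMap.add_apply, Prod.snd_add]
  have hlb_smull : ∀ (t : R) (η ξ : P₁), lb (t • η) ξ = t • lb η ξ := by
    intro t η ξ
    rw [hlb, hlb, show ((0:P₀), t • η) = t • ((0:P₀), η) from by ext <;> simp, map_smul,
      LinearMap.smul_apply, Prod.smul_snd]
  have hlb_addr : ∀ η ξ ξ' : P₁, lb η (ξ + ξ') = lb η ξ + lb η ξ' := by
    intro η ξ ξ'
    rw [hlb_skew η, hlb_addl, hlb_skew ξ η, hlb_skew ξ' η]
    abel
  have hlb_smulr : ∀ (t : R) (η ξ : P₁), lb η (t • ξ) = t • lb η ξ := by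
    intro t η ξ
    rw [hlb_skew η, hlb_smull, hlb_skew ξ η, smul_neg, neg_neg]
  have hlb0 : ∀ ξ : P₁, lb (0:P₁) ξ = 0 := by
    intro ξ; rw [hlb, hzero, map_zero, LinearMap.zero_apply]; rfl
  have hlb0' : ∀ ξ : P₁, lb ξ (0:P₁) = 0 := by
    intro ξ; rw [hlb_skew, hlb0, neg_zero]
  have hlbC : ∀ (η : P₁) (f g : P₀), lb η (C f g) = 0 := by
    intro η f g; rw [hlb_skew, hC_central, neg_zero]
  have hK0 : ∀ f : P₀, K f (0:P₀) = 0 := by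
    intro f; rw [hK, hzero, map_zero]; rfl
  have hK0' : ∀ g : P₀, K (0:P₀) g = 0 := by
    intro g; rw [hK, hzero, map_zero, LinearMap.zero_apply]; rfl
  -- full structure formula
  have hfull : ∀ a b : P₀ × P₁,
      br a b = (pb a.1 b.1, K a.1 b.1 + D a.1 b.2 - D b.1 a.2 + lb a.2 b.2) := by
    intro a b
    have h3 : (br ((0:P₀), a.2) ((b.1 : P₀), (0:P₁))).2 = - D b.1 a.2 := by
      rw [hbr_skew, Prod.snd_neg, ← hD]
    conv_lhs => rw [← pair_eq a, ← pair_eq b]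
    rw [map_add, map_add br, LinearMap.add_apply, LinearMap.add_apply]
    apply Prod.ext
    · simp only [Prod.fst_add, hb1]
      simp
    · simp only [Prod.snd_add, h3]
      rw [← hK, ← hD, ← hlb]
      abel
  -- split formula
  have hsplit : ∀ (a : P₀ × P₁) (ζ : P₁), br a ((0:P₀), ζ) = (0, D a.1 ζ + lb a.2 ζ) := by
    intro a ζ
    rw [hfull]
    simp [hD0', hlb0', hK0]
  -- the cocycle identity in cyclic form
  have hS : ∀ f g h : P₀,
      (D f (C g h) + C f (pb g h)) + (D g (C h f) + C g (pb h f))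
        + (D h (C f g) + C h (pb f g)) = 0 := by
    intro f g h
    have e1 : C f (pb g h) = - C (pb g h) f := hC_skew _ _
    have e2 : D g (C h f) = - D g (C f h) := by rw [hC_skew h f, hD_neg]
    have e3 : C g (pb h f) = C (pb f h) g := by
      rw [hpb_skew h f, map_neg, hC_skew, neg_neg]
    have e4 : C h (pb f g) = - C (pb f g) h := hC_skew _ _
    have hc := hC_cocycle f g h
    rw [e1, e2, e3, e4, ← hc]
    abel
  have hfst : ∀ (t : R) (x y : P₀ × P₁), (brt t x y).1 = pb x.1 y.1 := by
    intro t x y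
    rw [hbrt, Prod.fst_add, hb1]
    simp
  refine ⟨?_, ?_⟩
  · -- Part (1)
    intro t
    refine ⟨?_, ?_, ?_, ?_, ?_, ?_, ?_, ?_⟩
    · intro a b c
      simp only [hbrt, Prod.fst_add, map_add, LinearMap.add_apply, smul_add]
      ext <;> simp <;> abel
    · intro r a b
      simp only [hbrt, Prod.smul_fst, map_smul, LinearMap.smul_apply]
      ext <;> simp [smul_comm r t] <;> abel
    · intro a b c
      simp only [hbrt, Prod.fst_add, map_add, smul_add]
      ext <;> simp <;> abel
    · intro r a b
      simp only [hbrt, Prod.smul_fst, map_smul]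
      ext <;> simp [smul_comm r t] <;> abel
    · intro a b
      rw [hbrt, hbrt, hbr_skew, hC_skew]
      ext
      · simp
      · simp
        abel
    · -- Jacobi
      intro a b c
      have key : ∀ x y z : P₀ × P₁,
          brt t x (brt t y z) = br x (br y z)
            + ((0:P₀), t • D x.1 (C y.1 z.1) + t • C x.1 (pb y.1 z.1)) := by
        intro x y z
        rw [hbrt t x, hfst, hbrt t y z, map_add, hsplit, hD_smul, hlb_smulr, hlbC, smul_zero,
          add_zero]
        ext
        · simp
        · simp
          abel
      have hzsum : (((0:P₀), t • D a.1 (C b.1 c.1) + t • C a.1 (pb b.1 c.1)) : P₀ × P₁)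
          + ((0:P₀), t • D b.1 (C c.1 a.1) + t • C b.1 (pb c.1 a.1))
          + ((0:P₀), t • D c.1 (C a.1 b.1) + t • C c.1 (pb a.1 b.1)) = 0 := by
        have h2 := hS a.1 b.1 c.1
        ext
        · simp
        · simp only [Prod.snd_add, ← smul_add]
          rw [h2, smul_zero]
          rfl
      calc brt t a (brt t b c) + brt t b (brt t c a) + brt t c (brt t a b)
          = (br a (br b c) + br b (br c a) + br c (br a b))
            + ((((0:P₀), t • D a.1 (C b.1 c.1) + t • C a.1 (pb b.1 c.1)) : P₀ × P₁)
              + ((0:P₀), t • D b.1 (C c.1 a.1) + t • C b.1 (pb c.1 a.1))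
              + ((0:P₀), t • D c.1 (C a.1 b.1) + t • C c.1 (pb a.1 b.1))) := by
            rw [key a b c, key b c a, key c a b]; abel
        _ = 0 := by rw [hbr_jac, hzsum, add_zero]
    · -- Leibniz
      intro a b c
      have htm1 : ∀ (x : P₀ × P₁) (ζ : P₁) (cc : P₀ × P₁),
          tmul (x + ((0:P₀), ζ)) cc = tmul x cc + ((0:P₀), cc.1 • ζ) := by
        intro x ζ cc
        ext
        · simp [tmul]
        · simp [tmul, smul_add]
          abel
      have htm2 : ∀ (bb : P₀ × P₁) (y : P₀ × P₁) (ζ : P₁),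
          tmul bb (y + ((0:P₀), ζ)) = tmul bb y + ((0:P₀), bb.1 • ζ) := by
        intro bb y ζ
        ext
        · simp [tmul]
        · simp [tmul, smul_add]
          abel
      have hCr : C a.1 (b.1 * c.1) = b.1 • C a.1 c.1 + c.1 • C a.1 b.1 := by
        rw [hC_skew a.1 (b.1 * c.1), hC_der, hC_skew c.1 a.1, hC_skew b.1 a.1]
        simp
        abel
      rw [hbrt, hbrt, hbrt, hbr_leib, htm1, htm2]
      have hmul1 : (tmul b c).1 = b.1 * c.1 := rfl
      rw [hmul1, hCr]
      ext
      · simp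
      · simp only [Prod.snd_add, smul_add, smul_comm t b.1, smul_comm t c.1]
        abel
    · intro f g η ξ
      exact hfst t (f, η) (g, ξ)
  · -- Part (2)
    constructor
    · -- forward
      intro hAll
      obtain ⟨μ, hμder, hμ⟩ := hAll 1
      have hcent : ∀ (f : P₀) (ξ : P₁), lb (μ f) ξ = 0 := by
        intro f ξ
        have h := hμ ((f : P₀), (0:P₁)) ((0:P₀), ξ)
        simp only [hbrt, hfull] at h
        simp only [map_zero, LinearMap.zero_apply, hD0, hD0', hlb0, hlb0', hK0, hK0',
          add_zero, zero_add, sub_zero, zero_sub, one_smul, Prod.mk_add_mk,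
          hD_add, hlb_addl, neg_zero, Prod.mk.injEq] at h
        have h3 := sub_eq_zero_of_eq h.2
        have h4 : lb (μ f) ξ = - (0:P₁) := by
          rw [← h3]; abel
        rw [h4, neg_zero]
      refine ⟨μ, hμder, hcent, ?_⟩
      intro f g
      have h := hμ ((f : P₀), (0:P₁)) ((g : P₀), (0:P₁))
      simp only [hbrt, hfull] at h
      simp only [map_zero, LinearMap.zero_apply, hD0, hD0', hlb0, hlb0', hK0, hK0',
        add_zero, zero_add, sub_zero, zero_sub, one_smul, Prod.mk_add_mk,
        hD_add, hlb_addl, hcent, neg_zero, Prod.mk.injEq] at h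
      have h3 := sub_eq_zero_of_eq h.2
      have h4 : C f g - (D f (μ g) - D g (μ f) - μ (pb f g)) = 0 := by
        rw [← h3]; abel
      exact sub_eq_zero.mp h4
    · -- backward
      rintro ⟨ϑ, hϑder, hϑcent, hϑcob⟩ t
      refine ⟨t • ϑ, ?_, ?_⟩
      · intro f g
        simp only [LinearMap.smul_apply, hϑder, smul_add, smul_comm t f, smul_comm t g]
      · intro a b
        simp only [hbrt, hfull, LinearMap.smul_apply]
        apply Prod.ext
        · simp
        · simp only [Prod.snd_add, Prod.fst_add]
          simp only [hD_add, hD_smul, hlb_addl, hlb_addr, hlb_smull, hlb_smulr]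
          have e1 : ∀ ξ, lb (ϑ a.1) ξ = 0 := hϑcent a.1
          have e2 : lb a.2 (ϑ b.1) = 0 := by
            rw [hlb_skew, hϑcent, neg_zero]
          have e3 := hϑcob a.1 b.1
          simp only [e1, e2, smul_zero, zero_add, add_zero]
          rw [e3]
          simp only [smul_sub, hD_smul]
          abel
end

section
/- Let {·,·} be an admissible Poisson structure on P = P₀ ⋉ P₁ with Poisson triple ([·,·]₁, D, K). Then for all π₁ = (f,η), π₂ = (g,ξ) in P and all u ∈ P₀, the torsion maps satisfy: T_{{π₁,π₂}}(u) = T_{π₁}({g,u}₀) − T_{π₂}({f,u}₀) + D_f(T_{π₂}(u)) + [η, T_{π₂}(u)]₁ − D_g(T_{π₁}(u)) − [ξ, T_{π₁}(u)]₁. -/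
variable {R P₀ P₁ : Type*} [CommRing R] [CommRing P₀] [Algebra R P₀]
  [AddCommGroup P₁] [Module R P₁] [Module P₀ P₁] [IsScalarTower R P₀ P₁]

/-- behaviour of the torsion maps `T_{(f,η)}(u) = K(f,u) − D_u η` under the
admissible Poisson bracket:
`T_{{π₁,π₂}}(u) = T_{π₁}({g,u}₀) − T_{π₂}({f,u}₀) + (D_f + ad_η)(T_{π₂}(u)) − (D_g + ad_ξ)(T_{π₁}(u))`. -/
theorem stmt13
    -- the Poisson algebra (P₀, {·,·}₀)
    (pb : P₀ →ₗ[R] P₀ →ₗ[R] P₀)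
    (hpb_skew : ∀ f g, pb f g = - pb g f)
    (hpb_jac : ∀ f g h, pb f (pb g h) + pb g (pb h f) + pb h (pb f g) = 0)
    (hpb_leib : ∀ f g h, pb f (g * h) = pb f g * h + g * pb f h)
    -- the admissible Poisson structure {·,·}
    (br : (P₀ × P₁) →ₗ[R] (P₀ × P₁) →ₗ[R] P₀ × P₁)
    (hbr_skew : ∀ a b, br a b = - br b a)
    (hbr_jac : ∀ a b c, br a (br b c) + br b (br c a) + br c (br a b) = 0)
    (hbr_leib : ∀ a b c, br a (tmul b c) = tmul (br a b) c + tmul b (br a c))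
    (hbr_adm : ∀ (f g : P₀) (η ξ : P₁), (br (f, η) (g, ξ)).1 = pb f g)
    -- its Poisson triple ([·,·]₁, D, K)
    (lb : P₁ → P₁ → P₁) (hlb : ∀ η ξ, lb η ξ = (br (0, η) (0, ξ)).2)
    (D : P₀ → P₁ → P₁) (hD : ∀ f η, D f η = (br (f, 0) (0, η)).2)
    (K : P₀ → P₀ → P₁) (hK : ∀ f g, K f g = (br (f, 0) (g, 0)).2) :
    ∀ (f g u : P₀) (η ξ : P₁),
      K ((br (f, η) (g, ξ)).1) u - D u ((br (f, η) (g, ξ)).2) =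
        (K f (pb g u) - D (pb g u) η) - (K g (pb f u) - D (pb f u) ξ)
          + D f (K g u - D u ξ) + lb η (K g u - D u ξ)
          - D g (K f u - D u η) - lb ξ (K f u - D u η) := by
  intro f g u η ξ
  -- expansion of the second component of the bracket
  have hsplit : ∀ (v : P₀) (τ : P₁), ((v, τ) : P₀ × P₁) = (v, 0) + (0, τ) := by
    intro v τ; ext <;> simp
  have expand : ∀ (a : P₀) (α : P₁) (v : P₀) (τ : P₁),
      (br (a, α) (v, τ)).2 = K a v + D a τ - D v α + lb α τ := by
    intro a α v τ
    rw [hsplit a α, hsplit v τ]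
    simp only [map_add, LinearMap.add_apply, Prod.snd_add]
    have h1 : (br (0, α) (v, 0)).2 = - D v α := by
      rw [hD, hbr_skew (0, α) (v, 0)]; simp
    simp only [Prod.snd_add, hK, hD, hlb, h1]
    abel
  have hD0 : ∀ a : P₀, D a 0 = 0 := by
    intro a
    rw [hD]
    have : ((0, 0) : P₀ × P₁) = 0 := rfl
    rw [this, map_zero]; rfl
  have hlb0 : ∀ α : P₁, lb α 0 = 0 := by
    intro α
    rw [hlb]
    have : ((0, 0) : P₀ × P₁) = 0 := rfl
    rw [this, map_zero]; rfl
  set a : P₀ × P₁ := (f, η) with ha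
  set b : P₀ × P₁ := (g, ξ) with hb
  set c : P₀ × P₁ := (u, 0) with hc
  -- Jacobi in the useful form
  have hmain : br (br a b) c = br a (br b c) - br b (br a c) := by
    have hj := hbr_jac a b c
    have h1 : br c (br a b) = - br (br a b) c := hbr_skew _ _
    have h2 : br b (br c a) = - br b (br a c) := by
      rw [hbr_skew c a, map_neg]
    rw [h1, h2] at hj
    linear_combination (norm := module) -hj
  -- compute the first-level brackets
  have hbc1 : (br b c).1 = pb g u := hbr_adm g u ξ 0
  have hbc2 : (br b c).2 = K g u - D u ξ := by
    rw [hb, hc, expand, hD0, hlb0]; abel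
  have hac1 : (br a c).1 = pb f u := hbr_adm f u η 0
  have hac2 : (br a c).2 = K f u - D u η := by
    rw [ha, hc, expand, hD0, hlb0]; abel
  have lhs : (br (br a b) c).2 = K ((br a b).1) u - D u ((br a b).2) := by
    have : br a b = (((br a b).1, (br a b).2) : P₀ × P₁) := rfl
    rw [this, hc, expand, hD0, hlb0]; abel
  have rhs1 : (br a (br b c)).2
      = K f (pb g u) + D f (K g u - D u ξ) - D (pb g u) η + lb η (K g u - D u ξ) := by
    have : br b c = (((br b c).1, (br b c).2) : P₀ × P₁) := rfl
    rw [this, hbc1, hbc2, ha, expand]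
  have rhs2 : (br b (br a c)).2
      = K g (pb f u) + D g (K f u - D u η) - D (pb f u) ξ + lb ξ (K f u - D u η) := by
    have : br a c = (((br a c).1, (br a c).2) : P₀ × P₁) := rfl
    rw [this, hac1, hac2, hb, expand]
  have := congrArg Prod.snd hmain
  rw [lhs, Prod.snd_sub, rhs1, rhs2] at this
  rw [this]
  abel
end

section
/- Let {·,·} be an admissible Poisson structure on P = P₀ ⋉ P₁ with Poisson triple ([·,·]₁, D, K), and let c : P₀ → P₁ be an R-linear derivation (c(f·g) = f·c(g) + g·c(f)) with values in the center Z(P₁) of (P₁,[·,·]₁), satisfying the 1-cocycle condition D_f(c g) − D_g(c f) − c({f,g}₀) = 0 for all f,g ∈ P₀. Then the R-linear map X : P → P defined by X(f,η) := (0, c(f)) is a Poisson derivation of (P,{·,·}): X(π₁·π₂) = X(π₁)·π₂ + π₁·X(π₂) and X({π₁,π₂}) = {X(π₁),π₂} + {π₁,X(π₂)} for all π₁,π₂ ∈ P. -/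
variable {R P₀ P₁ : Type*} [CommRing R] [CommRing P₀] [Algebra R P₀]
  [AddCommGroup P₁] [Module R P₁] [Module P₀ P₁] [IsScalarTower R P₀ P₁]

/-- for a center-valued derivation `c : P₀ → Z(P₁)` which is a `∂_D`-1-cocycle,
the map `X(f,η) = (0, c(f))` is a Poisson derivation of the admissible Poisson algebra. -/
theorem stmt14
    -- the Poisson algebra (P₀, {·,·}₀)
    (pb : P₀ →ₗ[R] P₀ →ₗ[R] P₀)
    (hpb_skew : ∀ f g, pb f g = - pb g f)
    (hpb_jac : ∀ f g h, pb f (pb g h) + pb g (pb h f) + pb h (pb f g) = 0)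
    (hpb_leib : ∀ f g h, pb f (g * h) = pb f g * h + g * pb f h)
    -- the admissible Poisson structure {·,·}
    (br : (P₀ × P₁) →ₗ[R] (P₀ × P₁) →ₗ[R] P₀ × P₁)
    (hbr_skew : ∀ a b, br a b = - br b a)
    (hbr_jac : ∀ a b c, br a (br b c) + br b (br c a) + br c (br a b) = 0)
    (hbr_leib : ∀ a b c, br a (tmul b c) = tmul (br a b) c + tmul b (br a c))
    (hbr_adm : ∀ (f g : P₀) (η ξ : P₁), (br (f, η) (g, ξ)).1 = pb f g)
    -- its Poisson triple ([·,·]₁, D, K)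
    (lb : P₁ → P₁ → P₁) (hlb : ∀ η ξ, lb η ξ = (br (0, η) (0, ξ)).2)
    (D : P₀ → P₁ → P₁) (hD : ∀ f η, D f η = (br (f, 0) (0, η)).2)
    (K : P₀ → P₀ → P₁) (hK : ∀ f g, K f g = (br (f, 0) (g, 0)).2)
    -- the center-valued 1-cocycle derivation c
    (c : P₀ →ₗ[R] P₁)
    (hc_der : ∀ f g, c (f * g) = f • c g + g • c f)
    (hc_central : ∀ (f : P₀) (ξ : P₁), lb (c f) ξ = 0)
    (hc_cocycle : ∀ f g, D f (c g) - D g (c f) - c (pb f g) = 0)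
    -- the map X
    (X : P₀ × P₁ → P₀ × P₁)
    (hX : ∀ (f : P₀) (η : P₁), X (f, η) = ((0 : P₀), c f)) :
    (∀ a b : P₀ × P₁, X (tmul a b) = tmul (X a) b + tmul a (X b)) ∧
    (∀ a b : P₀ × P₁, X (br a b) = br (X a) b + br a (X b)) := by
  classical
  have hsplit : ∀ (f : P₀) (η : P₁), ((f, η) : P₀ × P₁) = (f, 0) + (0, η) := by
    intro f η; simp
  have hsnd : ∀ (f : P₀) (η : P₁) (g : P₀) (ξ : P₁),
      (br (f, η) (g, ξ)).2 = D f ξ - D g η + lb η ξ + K f g := by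
    intro f η g ξ
    rw [hsplit f η, hsplit g ξ]
    simp only [map_add, LinearMap.add_apply]
    have h3 : (br ((0 : P₀), η) ((g : P₀), (0 : P₁))).2 = - D g η := by
      rw [hbr_skew, hD]; simp
    simp only [Prod.snd_add, hK, hD, hlb, h3]
    abel
  constructor
  · rintro ⟨f, η⟩ ⟨g, ξ⟩
    show X (f * g, f • ξ + g • η) = _
    rw [hX, hX, hX, hc_der]
    show ((0 : P₀), f • c g + g • c f) = ((0 : P₀) * g, (0 : P₀) • ξ + g • c f) + (f * (0 : P₀), f • c g + (0 : P₀) • η)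
    simp
    abel
  · rintro ⟨f, η⟩ ⟨g, ξ⟩
    have hx : X (br (f, η) (g, ξ)) = ((0 : P₀), c (pb f g)) := by
      rw [← hbr_adm f g η ξ]; exact hX _ _
    rw [hx, hX, hX]
    have hD0 : ∀ ξ : P₁, D 0 ξ = 0 := by
      intro ξ
      rw [hD]
      have : ((0 : P₀), (0 : P₁)) = (0 : P₀ × P₁) := rfl
      rw [this, map_zero]
      rfl
    have hK0 : ∀ g : P₀, K 0 g = 0 := by
      intro g
      rw [hK]
      have : ((0 : P₀), (0 : P₁)) = (0 : P₀ × P₁) := rfl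
      rw [this, map_zero]
      rfl
    have hK0' : ∀ f : P₀, K f 0 = 0 := by
      intro f
      rw [hK]
      have : ((0 : P₀), (0 : P₁)) = (0 : P₀ × P₁) := rfl
      rw [this, map_zero]
      rfl
    have hlbskew : ∀ η ξ : P₁, lb η ξ = - lb ξ η := by
      intro η ξ
      rw [hlb, hlb, hbr_skew]
      rfl
    apply Prod.ext
    · have h1 := hbr_adm 0 g (c f) ξ
      have h2 := hbr_adm f 0 η (c g)
      simp only [Prod.fst_add, h1, h2, map_zero, LinearMap.zero_apply]
      simp
    · simp only [Prod.snd_add, hsnd]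
      rw [hD0, hK0, hK0', hc_central, hlbskew η (c g), hc_central]
      have := hc_cocycle f g
      have hcc : c (pb f g) = D f (c g) - D g (c f) := by
        have := hc_cocycle f g
        linear_combination (norm := abel) -this
      rw [hcc]
      have : D 0 η = 0 := hD0 η
      rw [this]
      abel
end

section
/- Let {·,·} be the admissible Poisson structure on P = P₀ ⋉ P₁ associated to a Poisson triple of the form (0, D, K) (abelian bracket on P₁), so {(f,η),(g,ξ)} = ({f,g}₀, D_f ξ − D_g η + K(f,g)). Suppose c : P₀ → P₁ is an R-linear derivation with K(f,g) = D_f(c g) − D_g(c f) − c({f,g}₀) for all f,g ∈ P₀ (a primitive of K), and let T : P₁ → P₀ be an R-linear map satisfying: T(f·η) = f·T(η); T(η)·ξ + T(ξ)·η = 0; T(D_f η) = {f, T(η)}₀; and D_{T(η)}ξ = D_{T(ξ)}η, for all f ∈ P₀, η,ξ ∈ P₁. Then the R-linear map X : P → P defined by X(f,η) := (T(c(f)) + T(η), −c(T(c(f))) − c(T(η))) is a Poisson derivation of (P,{·,·}): it is a derivation of both the multiplication and the bracket of P. -/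
variable {R P₀ P₁ : Type*} [CommRing R] [CommRing P₀] [Algebra R P₀]
  [AddCommGroup P₁] [Module R P₁] [Module P₀ P₁] [IsScalarTower R P₀ P₁]

/-- for the admissible Poisson structure associated to a Poisson triple of the
form `(0, D, K)` with `K = d_D c` exact, and `T` as in the definition of `ℰ(𝒫)`, the map
`X(f,η) = (T(c f) + T η, −c(T(c f)) − c(T η))` is a Poisson derivation. -/
theorem stmt18
    -- the Poisson algebra (P₀, {·,·}₀)
    (pb : P₀ →ₗ[R] P₀ →ₗ[R] P₀)
    (hpb_skew : ∀ f g, pb f g = - pb g f)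
    (hpb_jac : ∀ f g h, pb f (pb g h) + pb g (pb h f) + pb h (pb f g) = 0)
    (hpb_leib : ∀ f g h, pb f (g * h) = pb f g * h + g * pb f h)
    -- the flat contravariant derivative D
    (D : P₀ →ₗ[R] P₁ →ₗ[R] P₁)
    (hD_mul : ∀ f g η, D (f * g) η = f • D g η + g • D f η)
    (hD_leib : ∀ f g η, D f (g • η) = g • D f η + (pb f g) • η)
    (hD_flat : ∀ f g η, D f (D g η) - D g (D f η) = D (pb f g) η)
    -- the 2-cocycle K
    (K : P₀ →ₗ[R] P₀ →ₗ[R] P₁)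
    (hK_skew : ∀ f g, K f g = - K g f)
    (hK_der : ∀ f g h, K (f * g) h = f • K g h + g • K f h)
    (hK_cyc : ∀ f g h,
      D f (K g h) + D g (K h f) + D h (K f g)
        + K f (pb g h) + K g (pb h f) + K h (pb f g) = 0)
    -- the admissible Poisson structure of the triple (0, D, K)
    (br : P₀ × P₁ → P₀ × P₁ → P₀ × P₁)
    (hbr : ∀ (f g : P₀) (η ξ : P₁),
      br (f, η) (g, ξ) = (pb f g, D f ξ - D g η + K f g))
    -- a primitive c of K
    (c : P₀ →ₗ[R] P₁)
    (hc_der : ∀ f g, c (f * g) = f • c g + g • c f)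
    (hc_prim : ∀ f g, K f g = D f (c g) - D g (c f) - c (pb f g))
    -- the map T ∈ ℰ(𝒫)
    (T : P₁ →ₗ[R] P₀)
    (hT_lin : ∀ (f : P₀) (η : P₁), T (f • η) = f * T η)
    (hT_skew : ∀ η ξ : P₁, T η • ξ + T ξ • η = 0)
    (hT_D : ∀ (f : P₀) (η : P₁), T (D f η) = pb f (T η))
    (hT_sym : ∀ η ξ : P₁, D (T η) ξ = D (T ξ) η)
    -- the map X
    (X : P₀ × P₁ → P₀ × P₁)
    (hX : ∀ (f : P₀) (η : P₁),
      X (f, η) = (T (c f) + T η, - c (T (c f)) - c (T η))) :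
    (∀ a b : P₀ × P₁, X (tmul a b) = tmul (X a) b + tmul a (X b)) ∧
    (∀ a b : P₀ × P₁, X (br a b) = br (X a) b + br a (X b)) := by
  have hXeq : ∀ (f : P₀) (η : P₁), X (f, η) = (T (c f + η), - c (T (c f + η))) := by
    intro f η
    rw [hX, map_add T, map_add c]
    exact Prod.ext rfl (by abel)
  constructor
  · rintro ⟨f, η⟩ ⟨g, ξ⟩
    simp only [tmul, hXeq, Prod.mk_add_mk, Prod.mk.injEq]
    have h1 : T (c (f * g) + (f • ξ + g • η)) = T (c f + η) * g + f * T (c g + ξ) := by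
      rw [hc_der]
      simp only [map_add, hT_lin]
      ring
    refine ⟨h1, ?_⟩
    rw [h1]
    have hskew : T (c f + η) • (c g + ξ) + T (c g + ξ) • (c f + η) = 0 :=
      hT_skew (c f + η) (c g + ξ)
    simp only [smul_add] at hskew
    simp only [map_add c, hc_der, smul_neg]
    linear_combination (norm := abel) -hskew
  · rintro ⟨f, η⟩ ⟨g, ξ⟩
    rw [hbr f g η ξ, hXeq f η, hXeq g ξ, hbr, hbr, hXeq]
    have h2 : c (pb f g) + (D f ξ - D g η + K f g)
        = D f (c g + ξ) - D g (c f + η) := by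
      rw [hc_prim f g, map_add (D f), map_add (D g)]
      abel
    have h3 : T (c (pb f g) + (D f ξ - D g η + K f g))
        = pb f (T (c g + ξ)) - pb g (T (c f + η)) := by
      rw [h2, map_sub T, hT_D, hT_D]
    rw [h3]
    have hsym : D (T (c f + η)) (c g + ξ) = D (T (c g + ξ)) (c f + η) :=
      hT_sym (c f + η) (c g + ξ)
    simp only [map_add (D (T (c f + η))), map_add (D (T (c g + ξ)))] at hsym
    have hpb1 : pb g (T (c f + η)) = - pb (T (c f + η)) g := hpb_skew _ _
    simp only [Prod.mk_add_mk, Prod.mk.injEq]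
    constructor
    · rw [hpb1]; ring
    · rw [hpb1, hc_prim (T (c f + η)) g, hc_prim f (T (c g + ξ))]
      simp only [map_sub, map_neg]
      linear_combination (norm := abel) -hsym
end

section
/- Let λ : P₀ × P₁ → P₁ be a Poisson module structure over the Poisson algebra (P₀,{·,·}₀), i.e. an R-bilinear map satisfying λ(f, g·η) = g·λ(f,η) + {f,g}₀·η, λ(f·g, η) = f·λ(g,η) + g·λ(f,η), and λ({f,g}₀, η) = λ(f, λ(g,η)) − λ(g, λ(f,η)) for all f,g ∈ P₀ and η ∈ P₁. Then the bracket {(f,η),(g,ξ)}_λ := ({f,g}₀, λ(f,ξ) − λ(g,η)) is an admissible Poisson structure on the trivial extension algebra P = P₀ ⋉ P₁ (R-bilinear, antisymmetric, Jacobi, Leibniz for the multiplication of P, with pr₀{(f,η),(g,ξ)}_λ = {f,g}₀), and P₀ × {0} is a Poisson subalgebra: {(f,0),(g,0)}_λ = ({f,g}₀, 0) for all f,g ∈ P₀. -/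
variable {R P₀ P₁ : Type*} [CommRing R] [CommRing P₀] [Algebra R P₀]
  [AddCommGroup P₁] [Module R P₁] [Module P₀ P₁] [IsScalarTower R P₀ P₁]

/-- a Poisson module structure `λ` over `(P₀,{·,·}₀)` induces the admissible
Poisson structure `{(f,η),(g,ξ)}_λ = ({f,g}₀, λ(f,ξ) − λ(g,η))` on `P = P₀ ⋉ P₁`, for which
`P₀ × {0}` is a Poisson subalgebra. -/
theorem stmt19
    -- the Poisson algebra (P₀, {·,·}₀)
    (pb : P₀ →ₗ[R] P₀ →ₗ[R] P₀)
    (hpb_skew : ∀ f g, pb f g = - pb g f)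
    (hpb_jac : ∀ f g h, pb f (pb g h) + pb g (pb h f) + pb h (pb f g) = 0)
    (hpb_leib : ∀ f g h, pb f (g * h) = pb f g * h + g * pb f h)
    -- the Poisson module structure λ on P₁
    (lam : P₀ →ₗ[R] P₁ →ₗ[R] P₁)
    (hlam1 : ∀ f g η, lam f (g • η) = g • lam f η + (pb f g) • η)
    (hlam2 : ∀ f g η, lam (f * g) η = f • lam g η + g • lam f η)
    (hlam3 : ∀ f g η, lam (pb f g) η = lam f (lam g η) - lam g (lam f η))
    -- the induced bracket on P = P₀ ⋉ P₁
    (br : P₀ × P₁ → P₀ × P₁ → P₀ × P₁)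
    (hbr : ∀ (f g : P₀) (η ξ : P₁),
      br (f, η) (g, ξ) = (pb f g, lam f ξ - lam g η)) :
    -- R-bilinear
    (∀ a b c : P₀ × P₁, br (a + b) c = br a c + br b c) ∧
    (∀ (r : R) (a b : P₀ × P₁), br (r • a) b = r • br a b) ∧
    (∀ a b c : P₀ × P₁, br a (b + c) = br a b + br a c) ∧
    (∀ (r : R) (a b : P₀ × P₁), br a (r • b) = r • br a b) ∧
    -- antisymmetric, Jacobi, Leibniz, admissible
    (∀ a b : P₀ × P₁, br a b = - br b a) ∧
    (∀ a b c : P₀ × P₁, br a (br b c) + br b (br c a) + br c (br a b) = 0) ∧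
    (∀ a b c : P₀ × P₁, br a (tmul b c) = tmul (br a b) c + tmul b (br a c)) ∧
    (∀ (f g : P₀) (η ξ : P₁), (br (f, η) (g, ξ)).1 = pb f g) ∧
    -- P₀ × {0} is a Poisson subalgebra
    (∀ f g : P₀, br (f, (0 : P₁)) (g, (0 : P₁)) = (pb f g, (0 : P₁))) := by
  have hbr' : ∀ a b : P₀ × P₁, br a b = (pb a.1 b.1, lam a.1 b.2 - lam b.1 a.2) := by
    intro a b; rw [← hbr a.1 b.1 a.2 b.2]
  refine ⟨?_, ?_, ?_, ?_, ?_, ?_, ?_, ?_, ?_⟩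
  · intro a b c
    simp only [hbr', Prod.fst_add, Prod.snd_add, map_add, LinearMap.add_apply, Prod.mk_add_mk]
    exact Prod.ext rfl (by abel)
  · intro r a b
    simp only [hbr', Prod.smul_fst, Prod.smul_snd, map_smul, LinearMap.smul_apply,
      Prod.smul_mk, smul_sub]
  · intro a b c
    simp only [hbr', Prod.fst_add, Prod.snd_add, map_add, LinearMap.add_apply, Prod.mk_add_mk]
    exact Prod.ext rfl (by abel)
  · intro r a b
    simp only [hbr', Prod.smul_fst, Prod.smul_snd, map_smul, LinearMap.smul_apply,
      Prod.smul_mk, smul_sub]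
  · intro a b
    simp only [hbr', Prod.neg_mk]
    exact Prod.ext (hpb_skew _ _) (by abel)
  · intro a b c
    simp only [hbr', map_sub, LinearMap.sub_apply, hlam3, Prod.mk_add_mk]
    refine Prod.ext (hpb_jac _ _ _) ?_
    simp only [Prod.snd_zero]
    abel
  · intro a b c
    simp only [hbr', tmul]
    refine Prod.ext (by simp [hpb_leib]) ?_
    simp only [hlam1, hlam2, map_add, smul_sub, Prod.snd_add]
    abel
  · intro f g η ξ; rw [hbr]
  · intro f g; rw [hbr]; simp
end
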